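/- arXiv:1110.2933 — 7 statements merged into one kernel-verified Lean document; each statement's English description precedes it below -/
import Mathlib

section
/- Every finite simple graph has a good vertex, i.e., a vertex v such that for every two distinct non-adjacent neighbors u, u' of v there exists an induced cycle of the graph containing v, u, and u'. -/
namespace CompKim

open SimpleGraph

variable {V : Type*}

universe u

/-- `s` is the vertex set of an induced cycle (possibly a triangle) of `G`. -/
def IsInducedCycleOn (G : SimpleGraph V) (s : Set V) : Prop :=
  ∃ (v : V) (c : G.Walk v v), c.IsCycle ∧ c.toSubgraph.IsInduced ∧ c.toSubgraph.verts = s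

/-- A vertex is good if every two distinct non-adjacent neighbors lie with it on an
induced cycle. -/
def IsGood (G : SimpleGraph V) (v : V) : Prop :=
  ∀ u u' : V, u ≠ u' → G.Adj v u → G.Adj v u' → ¬ G.Adj u u' →
    ∃ s : Set V, IsInducedCycleOn G s ∧ v ∈ s ∧ u ∈ s ∧ u' ∈ s

/-- There is a walk from `u` to `u'` all of whose vertices avoid the closed
neighborhood of `v`, except possibly `u`, `u'`. -/
def Linked (G : SimpleGraph V) (v u u' : V) : Prop :=
  ∃ p : G.Walk u u', ∀ x ∈ p.support, x = u ∨ x = u' ∨ (x ≠ v ∧ ¬ G.Adj v x)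

def GoodL (G : SimpleGraph V) (v : V) : Prop :=
  ∀ u u' : V, u ≠ u' → G.Adj v u → G.Adj v u' → ¬ G.Adj u u' → Linked G v u u'

/-- A chord on a walk yields a strictly shorter walk within the same support. -/
lemma exists_shorter {G : SimpleGraph V} {u u' : V} (p : G.Walk u u') {x y : V}
    (hx : x ∈ p.support) (hy : y ∈ p.support) (hadj : G.Adj x y)
    (he : s(x, y) ∉ p.edges) :
    ∃ q : G.Walk u u', q.length < p.length ∧ ∀ z ∈ q.support, z ∈ p.support := by
  classical
  induction p with
  | nil =>
    rw [Walk.mem_support_nil_iff] at hx hy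
    subst hx; subst hy; exact absurd hadj (G.irrefl)
  | @cons c b w h t ih =>
    rw [Walk.support_cons, List.mem_cons] at hx hy
    -- helper for the case head = x
    have core : ∀ {x y : V}, x = c → y ∈ t.support → G.Adj x y → s(x, y) ∉ (Walk.cons h t).edges →
        ∃ q : G.Walk c w, q.length < (Walk.cons h t).length ∧
          ∀ z ∈ q.support, z ∈ (Walk.cons h t).support := by
      intro x y hxc hyt hadj he
      subst hxc
      have hyb : y ≠ b := by
        rintro rfl
        exact he (by simp [Walk.edges_cons])
      refine ⟨Walk.cons hadj (t.dropUntil y hyt), ?_, ?_⟩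
      · have hspec := congrArg Walk.length (t.take_spec hyt)
        rw [Walk.length_append] at hspec
        have hpos : 0 < (t.takeUntil y hyt).length := by
          rcases Nat.eq_zero_or_pos (t.takeUntil y hyt).length with hp | hp
          · exact absurd (Walk.eq_of_length_eq_zero hp).symm hyb
          · exact hp
        simp only [Walk.length_cons]
        omega
      · intro z hz
        rw [Walk.support_cons, List.mem_cons] at hz ⊢
        rcases hz with rfl | hz
        · exact Or.inl rfl
        · exact Or.inr (t.support_dropUntil_subset hyt hz)
    rcases hx with rfl | hxt
    · rcases hy with rfl | hyt
      · exact absurd hadj (G.irrefl)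
      · exact core rfl hyt hadj he
    · rcases hy with rfl | hyt
      · refine core rfl hxt hadj.symm ?_
        rwa [Sym2.eq_swap]
      · have het : s(x, y) ∉ t.edges := fun hmem => he (by simp [Walk.edges_cons, hmem])
        obtain ⟨q, hql, hqs⟩ := ih hxt hyt het
        refine ⟨Walk.cons h q, ?_, ?_⟩
        · simpa [Walk.length_cons] using Nat.succ_lt_succ hql
        · intro z hz
          rw [Walk.support_cons, List.mem_cons] at hz ⊢
          rcases hz with rfl | hz
          · exact Or.inl rfl
          · exact Or.inr (hqs z hz)

/-- Choose a walk of minimal length with a given support property. -/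
lemma exists_min_walk {G : SimpleGraph V} {u u' : V} {P : V → Prop}
    (h : ∃ p : G.Walk u u', ∀ z ∈ p.support, P z) :
    ∃ p : G.Walk u u', (∀ z ∈ p.support, P z) ∧
      ∀ q : G.Walk u u', (∀ z ∈ q.support, P z) → p.length ≤ q.length := by
  classical
  have h' : ∃ n, ∃ p : G.Walk u u', p.length = n ∧ ∀ z ∈ p.support, P z := by
    obtain ⟨p, hp⟩ := h
    exact ⟨p.length, p, rfl, hp⟩
  obtain ⟨p, hlen, hp⟩ := Nat.find_spec h'
  refine ⟨p, hp, fun q hq => ?_⟩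
  rw [hlen]
  exact Nat.find_le ⟨q, rfl, hq⟩

lemma linked_cycle {G : SimpleGraph V} {v u u' : V} (hne : u ≠ u')
    (hvu : G.Adj v u) (hvu' : G.Adj v u') (huu' : ¬ G.Adj u u')
    (hl : Linked G v u u') :
    ∃ s : Set V, IsInducedCycleOn G s ∧ v ∈ s ∧ u ∈ s ∧ u' ∈ s := by
  classical
  obtain ⟨p₀, hp₀, hmin₀⟩ := exists_min_walk hl
  set p : G.Walk u u' := p₀.bypass with hpdef
  have hQ : ∀ z ∈ p.support, z = u ∨ z = u' ∨ (z ≠ v ∧ ¬ G.Adj v z) :=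
    fun z hz => hp₀ z (p₀.support_bypass_subset hz)
  have hmin : ∀ q : G.Walk u u', (∀ z ∈ q.support, z = u ∨ z = u' ∨ (z ≠ v ∧ ¬ G.Adj v z)) →
      p.length ≤ q.length :=
    fun q hq => le_trans (p₀.length_bypass_le) (hmin₀ q hq)
  have hpath : p.IsPath := p₀.bypass_isPath
  -- chordlessness
  have hchord : ∀ x ∈ p.support, ∀ y ∈ p.support, G.Adj x y → s(x, y) ∈ p.edges := by
    intro x hx y hy hxy
    by_contra hce
    obtain ⟨q, hql, hqs⟩ := exists_shorter p hx hy hxy hce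
    have := hmin q (fun z hz => hQ z (hqs z hz))
    omega
  have hvns : v ∉ p.support := by
    intro hv
    rcases hQ v hv with rfl | rfl | ⟨hv', _⟩
    · exact hvu.ne rfl
    · exact hvu'.ne rfl
    · exact hv' rfl
  -- assemble the cycle
  let P : G.Walk u v := p.concat hvu'.symm
  have hPrev : P.reverse = Walk.cons hvu' p.reverse := p.reverse_concat hvu'.symm
  have hPpath : P.IsPath := by
    rw [← Walk.isPath_reverse_iff, hPrev]
    refine Walk.IsPath.cons ?_ ?_
    · rwa [Walk.isPath_reverse_iff]
    · rwa [Walk.support_reverse, List.mem_reverse]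
  have hPedges : s(v, u) ∉ P.edges := by
    rw [Walk.edges_concat, List.concat_eq_append, List.mem_append]
    rintro (hmem | hmem)
    · exact hvns (p.fst_mem_support_of_mem_edges hmem)
    · rw [List.mem_singleton] at hmem
      rcases Sym2.eq_iff.mp hmem with ⟨h1, h2⟩ | ⟨h1, h2⟩
      · exact hvu.ne' h2
      · exact hne h2
  let c : G.Walk v v := Walk.cons hvu P
  have hcyc : c.IsCycle := (Walk.cons_isCycle_iff P hvu).mpr ⟨hPpath, hPedges⟩
  have hmemc : ∀ z, z ∈ c.support ↔ (z = v ∨ z ∈ p.support) := by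
    intro z
    simp only [c, P, Walk.support_cons, Walk.support_concat, List.mem_cons, List.concat_eq_append, List.mem_append, List.mem_singleton]
    tauto
  -- adjacency in c.toSubgraph
  have hsub : c.toSubgraph = G.subgraphOfAdj hvu ⊔ (p.toSubgraph ⊔ (Walk.cons hvu'.symm Walk.nil).toSubgraph) := by
    show (Walk.cons hvu P).toSubgraph = _
    rw [Walk.toSubgraph]
    congr 1
    show (p.concat hvu'.symm).toSubgraph = _
    rw [Walk.concat_eq_append, Walk.toSubgraph_append]
  have hadj_vu : c.toSubgraph.Adj v u := by
    rw [hsub]; left; simp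
  have hadj_vu' : c.toSubgraph.Adj v u' := by
    rw [hsub]; right; right; simp [Walk.toSubgraph, Sym2.eq_swap]
  have hadj_p : ∀ {x y}, p.toSubgraph.Adj x y → c.toSubgraph.Adj x y := by
    intro x y hxy; rw [hsub]; right; left; exact hxy
  have hindu : c.toSubgraph.IsInduced := by
    intro x hx y hy hxy
    rw [Walk.mem_verts_toSubgraph, hmemc] at hx hy
    have key : ∀ {x y : V}, x = v → (y = v ∨ y ∈ p.support) → G.Adj x y → c.toSubgraph.Adj x y := by
      rintro x y rfl hy hxy
      rcases hy with rfl | hy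
      · exact absurd hxy (G.irrefl)
      · rcases hQ y hy with rfl | rfl | ⟨_, hnadj⟩
        · exact hadj_vu
        · exact hadj_vu'
        · exact absurd hxy hnadj
    rcases hx with rfl | hx
    · exact key rfl hy hxy
    · rcases hy with rfl | hy
      · exact (key rfl (Or.inr hx) hxy.symm).symm
      · have hedge := hchord x hx y hy hxy
        refine hadj_p ?_
        rw [← Subgraph.mem_edgeSet, p.mem_edges_toSubgraph]
        exact hedge
  refine ⟨c.toSubgraph.verts, ⟨v, c, hcyc, hindu, rfl⟩, ?_, ?_, ?_⟩
  · rw [Walk.mem_verts_toSubgraph, hmemc]; exact Or.inl rfl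
  · rw [Walk.mem_verts_toSubgraph, hmemc]; exact Or.inr p.start_mem_support
  · rw [Walk.mem_verts_toSubgraph, hmemc]; exact Or.inr p.end_mem_support
/-- Reachability from `r` by walks avoiding `S`. -/
def Reach (G : SimpleGraph V) (S : Set V) (r x : V) : Prop :=
  ∃ p : G.Walk r x, ∀ z ∈ p.support, z ∉ S

lemma Reach.not_mem {G : SimpleGraph V} {S : Set V} {r x : V} (h : Reach G S r x) : x ∉ S := by
  obtain ⟨p, hp⟩ := h; exact hp x p.end_mem_support

lemma reach_self {G : SimpleGraph V} {S : Set V} {r : V} (h : r ∉ S) : Reach G S r r :=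
  ⟨Walk.nil, by intro z hz; rw [Walk.mem_support_nil_iff] at hz; subst hz; exact h⟩

lemma Reach.adj {G : SimpleGraph V} {S : Set V} {r x y : V} (h : Reach G S r x)
    (ha : G.Adj x y) (hy : y ∉ S) : Reach G S r y := by
  obtain ⟨p, hp⟩ := h
  refine ⟨p.concat ha, ?_⟩
  intro z hz
  rw [Walk.support_concat, List.mem_append, List.mem_singleton] at hz
  rcases hz with hz | rfl
  · exact hp z hz
  · exact hy

lemma reach_of_mem_support {G : SimpleGraph V} {S : Set V} {r x : V} {p : G.Walk r x}
    (hp : ∀ z ∈ p.support, z ∉ S) : ∀ z ∈ p.support, Reach G S r z := by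
  classical
  intro z hz
  exact ⟨p.takeUntil z hz, fun w hw => hp w (p.support_takeUntil_subset hz hw)⟩

lemma reach_walk {G : SimpleGraph V} {S : Set V} {r x y : V} (hx : Reach G S r x)
    (hy : Reach G S r y) : ∃ q : G.Walk x y, ∀ z ∈ q.support, Reach G S r z := by
  obtain ⟨p, hp⟩ := hx
  obtain ⟨p', hp'⟩ := hy
  refine ⟨p.reverse.append p', ?_⟩
  intro z hz
  rw [Walk.mem_support_append_iff] at hz
  rcases hz with hz | hz
  · rw [Walk.support_reverse, List.mem_reverse] at hz
    exact reach_of_mem_support hp z hz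
  · exact reach_of_mem_support hp' z hz

lemma reach_or_adj {G : SimpleGraph V} {S : Set V} {s r : V} :
    ∀ {x y : V} (p : G.Walk x y), (∀ z ∈ p.support, z ∉ S ∨ z = s) →
      Reach G S r x → (Reach G S r y ∨ ∃ c, Reach G S r c ∧ G.Adj c s) := by
  intro x y p
  induction p with
  | nil => intro _ hx; exact Or.inl hx
  | @cons x w y h t ih =>
    intro hp hx
    by_cases hw : w = s
    · exact Or.inr ⟨x, hx, hw ▸ h⟩
    · have hwS : w ∉ S := by
        rcases hp w (by rw [Walk.support_cons]; exact List.mem_cons_of_mem _ t.start_mem_support)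
          with h' | h'
        · exact h'
        · exact absurd h' hw
      exact ih (fun z hz => hp z (by rw [Walk.support_cons]; exact List.mem_cons_of_mem _ hz))
        (hx.adj h hwS)
lemma side {V : Type u} [Fintype V] {n : ℕ}
    (IH : ∀ {W : Type u} [Fintype W] (G' : SimpleGraph W) (K' : Set W),
        Fintype.card W ≤ n → G'.IsClique K' → K' ≠ Set.univ → ∃ v, v ∉ K' ∧ GoodL G' v)
    (G : SimpleGraph V) (S : Set V) (a b : V)
    (hcard : Fintype.card V ≤ n + 1)
    (haS : a ∉ S) (hbS : b ∉ S)
    (hsep : ¬ Reach G S a b)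
    (hNa : ∀ s ∈ S, ∃ c, Reach G S a c ∧ G.Adj c s)
    (hNb : ∀ s ∈ S, ∃ c, Reach G S b c ∧ G.Adj c s) :
    ∃ v, Reach G S a v ∧ GoodL G v := by
  classical
  set Ca : Set V := {x | Reach G S a x} with hCaDef
  set Cb : Set V := {x | Reach G S b x} with hCbDef
  have hdisj : ∀ x, x ∈ Ca → x ∈ Cb → False := by
    intro x hxa hxb
    obtain ⟨p, hp⟩ := hxa
    obtain ⟨q, hq⟩ := hxb
    refine hsep ⟨p.append q.reverse, ?_⟩
    intro z hz
    rw [Walk.mem_support_append_iff] at hz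
    rcases hz with hz | hz
    · exact hp z hz
    · rw [Walk.support_reverse, List.mem_reverse] at hz
      exact hq z hz
  have hbCaS : b ∉ Ca ∪ S := by
    rintro (hb | hb)
    · exact hsep hb
    · exact hbS hb
  have haCa : a ∈ Ca := reach_self haS
  let H : SimpleGraph {x // x ∈ Ca ∪ S} :=
    { Adj := fun x y => x ≠ y ∧ (G.Adj x y ∨ ((x : V) ∈ S ∧ (y : V) ∈ S))
      symm := ⟨by
        rintro x y ⟨hne, hG | ⟨h1, h2⟩⟩
        · exact ⟨hne.symm, Or.inl hG.symm⟩
        · exact ⟨hne.symm, Or.inr ⟨h2, h1⟩⟩⟩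
      loopless := ⟨fun x h => h.1 rfl⟩ }
  have hKclique : H.IsClique {x : {x // x ∈ Ca ∪ S} | (x : V) ∈ S} :=
    fun x hx y hy hne => ⟨hne, Or.inr ⟨hx, hy⟩⟩
  have hKne : {x : {x // x ∈ Ca ∪ S} | (x : V) ∈ S} ≠ Set.univ := by
    intro hEq
    have : (⟨a, Or.inl haCa⟩ : {x // x ∈ Ca ∪ S}) ∈ {x : {x // x ∈ Ca ∪ S} | (x : V) ∈ S} :=
      hEq ▸ Set.mem_univ _
    exact haS this
  have hcard' : Fintype.card {x // x ∈ Ca ∪ S} ≤ n := by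
    have hlt : Fintype.card {x // x ∈ Ca ∪ S} < Fintype.card V := by
      refine Fintype.card_lt_of_injective_of_notMem (fun x => (x : V)) Subtype.val_injective
        (b := b) ?_
      rintro ⟨⟨x, hx⟩, rfl⟩
      exact hbCaS hx
    omega
  obtain ⟨v₀, hv₀S, hv₀good⟩ := IH H _ hcard' hKclique hKne
  have hv₀Ca : (v₀ : V) ∈ Ca := by
    rcases v₀.2 with h | h
    · exact h
    · exact absurd h hv₀S
  have hvS : (v₀ : V) ∉ S := hv₀S
  have hNv : ∀ y, G.Adj (v₀ : V) y → y ∈ Ca ∪ S := by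
    intro y hy
    by_cases hyS : y ∈ S
    · exact Or.inr hyS
    · exact Or.inl (hv₀Ca.adj hy hyS)
  have hCbv : ∀ c ∈ Cb, c ≠ (v₀ : V) ∧ ¬ G.Adj (v₀ : V) c := by
    intro c hc
    constructor
    · rintro rfl
      exact hdisj _ hv₀Ca hc
    · intro hadj
      exact hdisj _ hv₀Ca (hc.adj hadj.symm hvS)
  have hSS : ∀ s s' : V, s ∈ S → s' ∈ S →
      ∃ w : G.Walk s s', ∀ z ∈ w.support, z = s ∨ z = s' ∨ z ∈ Cb := by
    intro s s' hs hs'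
    obtain ⟨c, hc, hcs⟩ := hNb s hs
    obtain ⟨c', hc', hcs'⟩ := hNb s' hs'
    obtain ⟨q, hq⟩ := reach_walk hc hc'
    refine ⟨Walk.cons hcs.symm (q.concat hcs'), ?_⟩
    intro z hz
    rw [Walk.support_cons, List.mem_cons] at hz
    rcases hz with rfl | hz
    · exact Or.inl rfl
    · rw [Walk.support_concat, List.mem_append, List.mem_singleton] at hz
      rcases hz with hz | rfl
      · exact Or.inr (Or.inr (hq z hz))
      · exact Or.inr (Or.inl rfl)
  have hWT : ∀ (P : V → Prop), (∀ c ∈ Cb, P c) → ∀ (x y : {x // x ∈ Ca ∪ S}) (p : H.Walk x y),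
      (∀ z ∈ p.support, P (z : V)) → ∃ q : G.Walk (x : V) (y : V), ∀ z ∈ q.support, P z := by
    intro P hPCb x y p
    induction p with
    | nil =>
      intro hp
      refine ⟨Walk.nil, ?_⟩
      intro z hz
      rw [Walk.mem_support_nil_iff] at hz
      subst hz
      exact hp _ (Walk.start_mem_support _)
    | @cons x w y h t ih =>
      intro hp
      have hp' : ∀ z ∈ t.support, P (z : V) :=
        fun z hz => hp z (by rw [Walk.support_cons]; exact List.mem_cons_of_mem _ hz)
      obtain ⟨q, hq⟩ := ih hp'
      have hPx : P (x : V) := hp x (Walk.start_mem_support _)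
      rcases h with ⟨hne, hG | ⟨hxS, hwS⟩⟩
      · refine ⟨Walk.cons hG q, ?_⟩
        intro z hz
        rw [Walk.support_cons, List.mem_cons] at hz
        rcases hz with rfl | hz
        · exact hPx
        · exact hq z hz
      · obtain ⟨c, hc, hcs⟩ := hNb _ hxS
        obtain ⟨c', hc', hcs'⟩ := hNb _ hwS
        obtain ⟨q0, hq0⟩ := reach_walk hc hc'
        refine ⟨Walk.cons hcs.symm (q0.append (Walk.cons hcs' q)), ?_⟩
        intro z hz
        rw [Walk.support_cons, List.mem_cons] at hz
        rcases hz with rfl | hz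
        · exact hPx
        · rw [Walk.mem_support_append_iff] at hz
          rcases hz with hz | hz
          · exact hPCb z (hq0 z hz)
          · rw [Walk.support_cons, List.mem_cons] at hz
            rcases hz with rfl | hz
            · exact hPCb _ hc'
            · exact hq z hz
  refine ⟨(v₀ : V), hv₀Ca, ?_⟩
  intro u u' hneu huv huv' huu'
  have hu : u ∈ Ca ∪ S := hNv u huv
  have hu' : u' ∈ Ca ∪ S := hNv u' huv'
  by_cases hS2 : u ∈ S ∧ u' ∈ S
  · obtain ⟨w, hw⟩ := hSS u u' hS2.1 hS2.2
    refine ⟨w, ?_⟩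
    intro z hz
    rcases hw z hz with rfl | rfl | hzCb
    · exact Or.inl rfl
    · exact Or.inr (Or.inl rfl)
    · exact Or.inr (Or.inr (hCbv z hzCb))
  · have hH1 : H.Adj v₀ ⟨u, hu⟩ := ⟨fun hEq => huv.ne (congrArg Subtype.val hEq), Or.inl huv⟩
    have hH2 : H.Adj v₀ ⟨u', hu'⟩ := ⟨fun hEq => huv'.ne (congrArg Subtype.val hEq), Or.inl huv'⟩
    have hne₀ : (⟨u, hu⟩ : {x // x ∈ Ca ∪ S}) ≠ ⟨u', hu'⟩ :=
      fun hEq => hneu (congrArg Subtype.val hEq)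
    have hnadj₀ : ¬ H.Adj ⟨u, hu⟩ ⟨u', hu'⟩ := by
      rintro ⟨-, hG | hss⟩
      · exact huu' hG
      · exact hS2 hss
    obtain ⟨p₀, hp₀⟩ := hv₀good ⟨u, hu⟩ ⟨u', hu'⟩ hne₀ hH1 hH2 hnadj₀
    have hcond : ∀ z ∈ p₀.support, ((z : V) = u ∨ (z : V) = u' ∨
        ((z : V) ≠ (v₀ : V) ∧ ¬ G.Adj (v₀ : V) (z : V))) := by
      intro z hz
      rcases hp₀ z hz with rfl | rfl | ⟨hzv, hzH⟩
      · exact Or.inl rfl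
      · exact Or.inr (Or.inl rfl)
      · refine Or.inr (Or.inr ⟨fun hEq => hzv (Subtype.ext hEq), fun hGadj => hzH ?_⟩)
        exact ⟨fun hEq => hGadj.ne (congrArg Subtype.val hEq), Or.inl hGadj⟩
    obtain ⟨q, hq⟩ := hWT (fun x => x = u ∨ x = u' ∨ (x ≠ (v₀ : V) ∧ ¬ G.Adj (v₀ : V) x))
      (fun c hc => Or.inr (Or.inr (hCbv c hc))) ⟨u, hu⟩ ⟨u', hu'⟩ p₀ hcond
    exact ⟨q, hq⟩
theorem main_aux : ∀ (n : ℕ) {W : Type u} [Fintype W] (G : SimpleGraph W) (K : Set W),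
    Fintype.card W ≤ n → G.IsClique K → K ≠ Set.univ → ∃ v, v ∉ K ∧ GoodL G v := by
  intro n
  induction n with
  | zero =>
    intro W _ G K hcard hK hKne
    exfalso
    have hW : IsEmpty W := Fintype.card_eq_zero_iff.mp (le_antisymm hcard (Nat.zero_le _))
    exact hKne (Set.eq_univ_of_forall fun x => (hW.false x).elim)
  | succ n IH =>
    intro W _ G K hcard hK hKne
    classical
    by_cases hcomp : ∀ x y : W, x ≠ y → G.Adj x y
    · obtain ⟨v, hv⟩ : ∃ v, v ∉ K := by
        by_contra h
        push_neg at h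
        exact hKne (Set.eq_univ_of_forall h)
      exact ⟨v, hv, fun u u' hne _ _ hnadj => absurd (hcomp u u' hne) hnadj⟩
    · push_neg at hcomp
      obtain ⟨a, b, hab, hnadj⟩ := hcomp
      set Sep : Finset W → Prop := fun s => a ∉ s ∧ b ∉ s ∧ ¬ Reach G (↑s) a b with hSepDef
      have hSep0 : Sep (Finset.univ.filter (G.Adj a ·)) := by
        refine ⟨by simp, by simp [hnadj], ?_⟩
        rintro ⟨p, hp⟩
        cases p with
        | nil => exact hab rfl
        | @cons _ c _ h t =>
          exact hp c (by rw [Walk.support_cons]; exact List.mem_cons_of_mem _ t.start_mem_support)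
            (by simp [h])
      obtain ⟨S, hSmem, hSmin⟩ :=
        Finset.exists_min_image (Finset.univ.filter Sep) Finset.card ⟨_, Finset.mem_filter.mpr ⟨Finset.mem_univ _, hSep0⟩⟩
      rw [Finset.mem_filter] at hSmem
      obtain ⟨-, haS, hbS, hsepab⟩ := hSmem
      have haS' : a ∉ (↑S : Set W) := haS
      have hbS' : b ∉ (↑S : Set W) := hbS
      have hsepba : ¬ Reach G (↑S : Set W) b a := by
        rintro ⟨p, hp⟩
        exact hsepab ⟨p.reverse, fun z hz => hp z (by rwa [Walk.support_reverse,
          List.mem_reverse] at hz)⟩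
      have key : ∀ s ∈ S, ∃ p : G.Walk a b, ∀ z ∈ p.support, z ∉ (↑S : Set W) ∨ z = s := by
        intro s hs
        have hcardlt : (S.erase s).card < S.card := Finset.card_erase_lt_of_mem hs
        have hererase : ¬ Sep (S.erase s) := by
          intro hsep'
          have := hSmin (S.erase s) (Finset.mem_filter.mpr ⟨Finset.mem_univ _, hsep'⟩)
          omega
        have hA : a ∉ S.erase s := fun h => haS (Finset.mem_of_mem_erase h)
        have hB : b ∉ S.erase s := fun h => hbS (Finset.mem_of_mem_erase h)
        have hC : Reach G (↑(S.erase s)) a b := by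
          by_contra hC
          exact hererase ⟨hA, hB, hC⟩
        obtain ⟨p, hp⟩ := hC
        refine ⟨p, fun z hz => ?_⟩
        have hz' := hp z hz
        by_cases hzs : z = s
        · exact Or.inr hzs
        · refine Or.inl fun hzS => hz' ?_
          rw [Finset.coe_erase]
          exact ⟨hzS, hzs⟩
      have hNa : ∀ s ∈ (↑S : Set W), ∃ c, Reach G (↑S : Set W) a c ∧ G.Adj c s := by
        intro s hs
        obtain ⟨p, hp⟩ := key s hs
        rcases reach_or_adj p hp (reach_self haS') with hreach | hres
        · exact absurd hreach hsepab
        · exact hres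
      have hNb : ∀ s ∈ (↑S : Set W), ∃ c, Reach G (↑S : Set W) b c ∧ G.Adj c s := by
        intro s hs
        obtain ⟨p, hp⟩ := key s hs
        have hp' : ∀ z ∈ p.reverse.support, z ∉ (↑S : Set W) ∨ z = s := by
          intro z hz
          rw [Walk.support_reverse, List.mem_reverse] at hz
          exact hp z hz
        rcases reach_or_adj p.reverse hp' (reach_self hbS') with hreach | hres
        · exact absurd hreach hsepba
        · exact hres
      by_cases hKCa : ∀ x ∈ K, ¬ Reach G (↑S : Set W) a x
      · obtain ⟨v, hvCa, hgood⟩ := side (fun {W'} _ G' K' h1 h2 h3 => IH G' K' h1 h2 h3)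
          G (↑S) a b hcard haS' hbS' hsepab hNa hNb
        exact ⟨v, fun hvK => hKCa v hvK hvCa, hgood⟩
      · push_neg at hKCa
        obtain ⟨k, hkK, hkCa⟩ := hKCa
        have hKCb : ∀ x ∈ K, ¬ Reach G (↑S : Set W) b x := by
          intro x hx hxCb
          have hdisj : ¬ Reach G (↑S : Set W) a x := by
            rintro ⟨p, hp⟩
            obtain ⟨q, hq⟩ := hxCb
            refine hsepab ⟨p.append q.reverse, ?_⟩
            intro z hz
            rw [Walk.mem_support_append_iff] at hz
            rcases hz with hz | hz
            · exact hp z hz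
            · rw [Walk.support_reverse, List.mem_reverse] at hz
              exact hq z hz
          by_cases hxk : x = k
          · subst hxk
            exact hdisj hkCa
          · have hadj : G.Adj k x := hK hkK hx fun h => hxk h.symm
            exact hdisj (hkCa.adj hadj hxCb.not_mem)
        obtain ⟨v, hvCb, hgood⟩ := side (fun {W'} _ G' K' h1 h2 h3 => IH G' K' h1 h2 h3)
          G (↑S) b a hcard hbS' haS' hsepba hNb hNa
        exact ⟨v, fun hvK => hKCb v hvK hvCb, hgood⟩

/-- Every finite simple graph has a good vertex. -/
theorem exists_good_vertex [Fintype V] [Nonempty V] (G : SimpleGraph V) :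
    ∃ v : V, IsGood G v := by
  have hclique : G.IsClique (∅ : Set V) := fun x hx => absurd hx (Set.notMem_empty x)
  obtain ⟨v, -, hv⟩ := main_aux (Fintype.card V) G ∅ le_rfl hclique Set.empty_ne_univ
  exact ⟨v, fun u u' h1 h2 h3 h4 => linked_cycle h1 h2 h3 h4 (hv u u' h1 h2 h3 h4)⟩

end CompKim
end

section
/- If v is a good vertex of a finite simple graph G, then the simplicial defect of v is at most the number of holes of G containing v. -/
namespace CompKim

open SimpleGraph

variable {V : Type*}

/-- A hole is an induced cycle on at least 4 vertices. -/
def IsHole (G : SimpleGraph V) (s : Set V) : Prop :=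
  IsInducedCycleOn G s ∧ 4 ≤ s.ncard

/-- The number of holes of `G`. -/
noncomputable def holeCount (G : SimpleGraph V) : ℕ := {s : Set V | IsHole G s}.ncard

/-- The number of holes of `G` containing `v`. -/
noncomputable def holeCountAt (G : SimpleGraph V) (v : V) : ℕ :=
  {s : Set V | IsHole G s ∧ v ∈ s}.ncard

/-- The clique number of the subgraph of `G` induced on the neighborhood of `v`. -/
noncomputable def neighborCliqueNumber (G : SimpleGraph V) (v : V) : ℕ :=
  sSup {n | ∃ s : Finset V, G.IsNClique n s ∧ ↑s ⊆ G.neighborSet v}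

/-- The simplicial defect of a vertex: `|N(v)| - ω(G[N(v)])`. -/
noncomputable def defect (G : SimpleGraph V) (v : V) : ℕ :=
  (G.neighborSet v).ncard - neighborCliqueNumber G v

/-! ### Auxiliary lemmas -/

/-- The start of a path has at most one neighbor in the walk subgraph. -/
lemma path_nbr_start {G : SimpleGraph V} {a b : V} (p : G.Walk a b) (hp : p.IsPath) :
    ∃ w, p.toSubgraph.neighborSet a ⊆ {w} := by
  cases p with
  | nil => exact ⟨a, by simp [Walk.toSubgraph, neighborSet_singletonSubgraph]⟩
  | @cons _ b' _ h q =>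
    rw [Walk.cons_isPath_iff] at hp
    refine ⟨b', fun z hz => ?_⟩
    have hz' : (G.subgraphOfAdj h ⊔ q.toSubgraph).Adj a z := hz
    rw [Subgraph.sup_adj] at hz'
    rcases hz' with hz' | hz'
    · rw [subgraphOfAdj_adj, Sym2.eq_iff] at hz'
      rcases hz' with ⟨-, h2⟩ | ⟨h1, h2⟩
      · exact h2.symm
      · exact absurd (h2 ▸ h) (G.loopless.irrefl _)
    · exact absurd ((Walk.mem_verts_toSubgraph q).mp hz'.fst_mem) hp.2

/-- The start of a cycle has at most two neighbors in the walk subgraph. -/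
lemma cycle_nbr_start {G : SimpleGraph V} {x : V} (c : G.Walk x x) (hc : c.IsCycle) :
    ∃ w₁ w₂, c.toSubgraph.neighborSet x ⊆ {w₁, w₂} := by
  cases c with
  | nil => exact absurd hc Walk.IsCycle.not_of_nil
  | @cons _ b _ h q =>
    rw [Walk.cons_isCycle_iff] at hc
    obtain ⟨w, hw⟩ := path_nbr_start q.reverse hc.1.reverse
    refine ⟨b, w, fun z hz => ?_⟩
    have hz' : (G.subgraphOfAdj h ⊔ q.toSubgraph).Adj x z := hz
    rw [Subgraph.sup_adj] at hz'
    rcases hz' with hz' | hz'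
    · rw [subgraphOfAdj_adj, Sym2.eq_iff] at hz'
      rcases hz' with ⟨-, h2⟩ | ⟨h1, h2⟩
      · exact Or.inl h2.symm
      · exact absurd (h2 ▸ h) (G.loopless.irrefl _)
    · have hz'' : q.reverse.toSubgraph.Adj x z := by rwa [Walk.toSubgraph_reverse]
      exact Or.inr (hw hz'')

/-- Any vertex of a cycle has at most two neighbors in the walk subgraph. -/
lemma cycle_nbr {G : SimpleGraph V} {u x : V} (c : G.Walk u u) (hc : c.IsCycle)
    (hx : x ∈ c.support) : (c.toSubgraph.neighborSet x).ncard ≤ 2 := by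
  classical
  obtain ⟨w₁, w₂, hw⟩ := cycle_nbr_start (c.rotate x hx) (hc.rotate hx)
  rw [Walk.toSubgraph_rotate] at hw
  calc (c.toSubgraph.neighborSet x).ncard
      ≤ ({w₁, w₂} : Set V).ncard := Set.ncard_le_ncard hw (Set.toFinite _)
    _ ≤ 2 := (Set.ncard_insert_le _ _).trans (by simp)

/-- A vertex of an induced cycle has at most two `G`-neighbors in it. -/
lemma induced_cycle_nbr {G : SimpleGraph V} {s : Set V} (hs : IsInducedCycleOn G s) {v : V}
    (hvs : v ∈ s) : {x ∈ s | G.Adj v x}.ncard ≤ 2 := by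
  obtain ⟨u, c, hc, hind, hverts⟩ := hs
  have hsub : {x ∈ s | G.Adj v x} ⊆ c.toSubgraph.neighborSet v := by
    rintro x ⟨hxs, hadj⟩
    exact hind (by rw [hverts]; exact hvs) (by rw [hverts]; exact hxs) hadj
  have hvsupp : v ∈ c.support :=
    (Walk.mem_verts_toSubgraph c).mp (by rw [hverts]; exact hvs)
  exact le_trans (Set.ncard_le_ncard hsub (Walk.finite_neighborSet_toSubgraph c))
    (cycle_nbr c hc hvsupp)

/-- An induced cycle through `v` and two non-adjacent neighbors of `v` has at least
four vertices. -/
lemma four_le_ncard {G : SimpleGraph V} {s : Set V} (hs : IsInducedCycleOn G s)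
    {v u u' : V} (hvu : G.Adj v u) (hvu' : G.Adj v u') (huu : u ≠ u') (hnadj : ¬ G.Adj u u')
    (hvs : v ∈ s) (hus : u ∈ s) (hu's : u' ∈ s) : 4 ≤ s.ncard := by
  classical
  by_contra hlt
  push_neg at hlt
  obtain ⟨w, c, hc, hind, hverts⟩ := hs
  have hsfin : s.Finite := by
    rw [← hverts, Walk.verts_toSubgraph]; exact c.support.finite_toSet
  have hs0 : ({v, u, u'} : Set V) ⊆ s := by
    rintro x (rfl | rfl | rfl) <;> assumption
  have h3 : ({v, u, u'} : Set V).ncard = 3 :=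
    Set.ncard_eq_three.mpr ⟨v, u, u', hvu.ne, hvu'.ne, huu, rfl⟩
  have heq : ({v, u, u'} : Set V) = s :=
    Set.eq_of_subset_of_ncard_le hs0 (by omega) hsfin
  have hmem : ∀ e ∈ c.edges, e = s(v, u) ∨ e = s(v, u') := by
    intro e he
    have he' : e ∈ c.toSubgraph.edgeSet := (Walk.mem_edges_toSubgraph c).mpr he
    induction e using Sym2.ind with
    | _ a b =>
      rw [Subgraph.mem_edgeSet] at he'
      have hab : G.Adj a b := he'.adj_sub
      have ha : a ∈ ({v, u, u'} : Set V) := by rw [heq, ← hverts]; exact he'.fst_mem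
      have hb : b ∈ ({v, u, u'} : Set V) := by rw [heq, ← hverts]; exact he'.snd_mem
      simp only [Set.mem_insert_iff, Set.mem_singleton_iff] at ha hb
      rcases ha with rfl | rfl | rfl <;> rcases hb with rfl | rfl | rfl <;>
        first
          | exact absurd hab (G.loopless.irrefl _)
          | exact absurd hab hnadj
          | exact absurd hab.symm hnadj
          | exact Or.inl rfl
          | exact Or.inr rfl
          | exact Or.inl Sym2.eq_swap
          | exact Or.inr Sym2.eq_swap
  have hnodup : c.edges.Nodup := hc.isCircuit.isTrail.edges_nodup
  have hlen : 3 ≤ c.edges.length := by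
    rw [Walk.length_edges]; exact hc.three_le_length
  have hsubF : c.edges.toFinset ⊆ ({s(v, u), s(v, u')} : Finset (Sym2 V)) := by
    intro e he
    rw [List.mem_toFinset] at he
    rcases hmem e he with rfl | rfl <;> simp
  have hcard : c.edges.toFinset.card ≤ 2 :=
    (Finset.card_le_card hsubF).trans ((Finset.card_insert_le _ _).trans (by simp))
  rw [List.toFinset_card_of_nodup hnodup] at hcard
  omega

lemma le_neighborCliqueNumber [Fintype V] (G : SimpleGraph V) (v : V) {n : ℕ} {s : Finset V}
    (hs : G.IsNClique n s) (hsub : ↑s ⊆ G.neighborSet v) : n ≤ neighborCliqueNumber G v := by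
  classical
  refine le_csSup ⟨Fintype.card V, ?_⟩ ⟨s, hs, hsub⟩
  rintro m ⟨t, ht, -⟩
  rw [← ht.2]
  exact Finset.card_le_univ t

lemma exists_max_clique [Fintype V] (G : SimpleGraph V) (v : V) :
    ∃ C : Finset V, G.IsNClique (neighborCliqueNumber G v) C ∧ ↑C ⊆ G.neighborSet v := by
  classical
  have hne : {n | ∃ s : Finset V, G.IsNClique n s ∧ ↑s ⊆ G.neighborSet v}.Nonempty :=
    ⟨0, ∅, by simp, by simp⟩
  have hbdd : BddAbove {n | ∃ s : Finset V, G.IsNClique n s ∧ ↑s ⊆ G.neighborSet v} := by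
    refine ⟨Fintype.card V, ?_⟩
    rintro m ⟨t, ht, -⟩
    rw [← ht.2]
    exact Finset.card_le_univ t
  exact Nat.sSup_mem hne hbdd

/-- For a good vertex `v`, the simplicial defect of `v` is at most the number of holes
containing `v`. -/
theorem defect_le_holeCountAt_of_good [Fintype V] (G : SimpleGraph V) (v : V)
    (hv : IsGood G v) : defect G v ≤ holeCountAt G v := by
  classical
  set N := G.neighborSet v with hN
  set P : Set (Set V) :=
    {p | ∃ u u' : V, u ≠ u' ∧ G.Adj v u ∧ G.Adj v u' ∧ ¬ G.Adj u u' ∧ p = {u, u'}} with hP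
  obtain ⟨C, hC, hCN⟩ := exists_max_clique G v
  -- every vertex of N outside C has a non-neighbor in C
  have key : ∀ x ∈ N \ ↑C, ∃ y, y ∈ C ∧ y ≠ x ∧ ¬ G.Adj x y := by
    rintro x ⟨hxN, hxC⟩
    by_contra hcon
    push_neg at hcon
    have hclq : G.IsNClique (neighborCliqueNumber G v + 1) (insert x C) := by
      constructor
      · rw [Finset.coe_insert, isClique_insert]
        refine ⟨hC.1, fun b hb hne => ?_⟩
        exact hcon b hb (Ne.symm hne)
      · rw [Finset.card_insert_of_notMem hxC, hC.2]
    have hle := le_neighborCliqueNumber G v hclq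
      (by rw [Finset.coe_insert]; exact Set.insert_subset_iff.mpr ⟨hxN, hCN⟩)
    omega
  -- Step A : |N| - ω ≤ number of non-adjacent pairs
  have hA1 : N.ncard ≤ (N \ ↑C).ncard + C.card := by
    have hsub : N ⊆ (N \ ↑C) ∪ ↑C := by
      intro x hx
      by_cases h : x ∈ (↑C : Set V)
      · exact Or.inr h
      · exact Or.inl ⟨hx, h⟩
    calc N.ncard ≤ ((N \ ↑C) ∪ ↑C).ncard := Set.ncard_le_ncard hsub (Set.toFinite _)
      _ ≤ (N \ ↑C).ncard + (↑C : Set V).ncard := Set.ncard_union_le _ _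
      _ = (N \ ↑C).ncard + C.card := by rw [Set.ncard_coe_finset]
  have hA2 : (N \ ↑C).ncard ≤ P.ncard := by
    set f : V → Set V := fun x =>
      if h : x ∈ N \ ↑C then {x, (key x h).choose} else ∅ with hf
    have hfx : ∀ x (h : x ∈ N \ ↑C), f x = {x, (key x h).choose} := fun x h => dif_pos h
    refine Set.ncard_le_ncard_of_injOn f (fun x hx => ?_) (fun x hx x' hx' hxx => ?_)
      (Set.toFinite _)
    · obtain ⟨hy, hyx, hnadj⟩ := (key x hx).choose_spec
      refine ⟨x, (key x hx).choose, Ne.symm hyx, hx.1, hCN hy, hnadj, (hfx x hx)⟩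
    · rw [hfx x hx, hfx x' hx'] at hxx
      have : x ∈ ({x', (key x' hx').choose} : Set V) := by rw [← hxx]; exact Or.inl rfl
      rcases this with rfl | h
      · rfl
      · exact absurd ((key x' hx').choose_spec.1 : _ ∈ C) (h ▸ hx.2)
  -- Step B : each non-adjacent pair yields a distinct hole through v
  have hQ : ∀ p ∈ P, ∃ s : Set V, (IsHole G s ∧ v ∈ s) ∧ p = {x ∈ s | G.Adj v x} := by
    rintro p ⟨u, u', hne, hu, hu', hnadj, rfl⟩
    obtain ⟨s, hind, hvs, hus, hu's⟩ := hv u u' hne hu hu' hnadj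
    have h4 : 4 ≤ s.ncard := four_le_ncard hind hu hu' hne hnadj hvs hus hu's
    refine ⟨s, ⟨⟨hind, h4⟩, hvs⟩, ?_⟩
    have hsub : ({u, u'} : Set V) ⊆ {x ∈ s | G.Adj v x} := by
      rintro x (rfl | rfl)
      · exact ⟨hus, hu⟩
      · exact ⟨hu's, hu'⟩
    have h2 : ({u, u'} : Set V).ncard = 2 := Set.ncard_pair hne
    have hle : {x ∈ s | G.Adj v x}.ncard ≤ 2 := induced_cycle_nbr hind hvs
    exact Set.eq_of_subset_of_ncard_le hsub (by omega) (Set.toFinite _)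
  have hB : P.ncard ≤ holeCountAt G v := by
    set g : Set V → Set V := fun p =>
      if h : ∃ s : Set V, (IsHole G s ∧ v ∈ s) ∧ p = {x ∈ s | G.Adj v x} then h.choose else ∅
      with hg
    have hgp : ∀ p ∈ P, (IsHole G (g p) ∧ v ∈ g p) ∧ p = {x ∈ g p | G.Adj v x} := by
      intro p hp
      have h := hQ p hp
      simp only [hg, dif_pos h]
      exact h.choose_spec
    refine Set.ncard_le_ncard_of_injOn g (fun p hp => (hgp p hp).1)
      (fun p hp p' hp' hpp => ?_) (Set.toFinite _)
    rw [(hgp p hp).2, (hgp p' hp').2, hpp]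
  -- assemble
  have hCcard : C.card = neighborCliqueNumber G v := hC.2
  have : defect G v = N.ncard - neighborCliqueNumber G v := rfl
  omega

end CompKim
end

section
/- For any vertex v of a finite simple graph G with at least 2 vertices, the competition number satisfies cp(G) ≤ max{1, cp(G - v)} + defect(v). -/
namespace CompKim

open SimpleGraph

variable {V : Type*}

/-- The competition graph of a digraph given as a relation: distinct vertices are
adjacent iff they have a common out-neighbor. -/
def competitionGraph {W : Type*} (D : W → W → Prop) : SimpleGraph W where
  Adj a b := a ≠ b ∧ ∃ w, D a w ∧ D b w
  symm := by constructor; rintro a b ⟨hab, w, h1, h2⟩; exact ⟨hab.symm, w, h2, h1⟩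
  loopless := by constructor; rintro a ⟨h, -⟩; exact h rfl

/-- A relation is a DAG relation if it admits no directed cycle. -/
def IsDagRel {W : Type*} (D : W → W → Prop) : Prop := ∀ w, ¬ Relation.TransGen D w w

/-- `G` together with `k` added isolated vertices. -/
def addIsolated {V : Type*} (G : SimpleGraph V) (k : ℕ) : SimpleGraph (V ⊕ Fin k) where
  Adj a b := ∃ u v, a = Sum.inl u ∧ b = Sum.inl v ∧ G.Adj u v
  symm := by constructor; rintro a b ⟨u, v, rfl, rfl, h⟩; exact ⟨v, u, rfl, rfl, h.symm⟩
  loopless := by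
    constructor
    rintro a ⟨u, v, rfl, heq, hadj⟩
    cases Sum.inl.inj heq
    exact G.loopless.irrefl u hadj

/-- The competition number: the least `k` such that `G` plus `k` isolated vertices is
the competition graph of a directed acyclic graph. -/
noncomputable def competitionNumber {V : Type*} (G : SimpleGraph V) : ℕ :=
  sInf {k | ∃ D : (V ⊕ Fin k) → (V ⊕ Fin k) → Prop,
    IsDagRel D ∧ competitionGraph D = addIsolated G k}

/-! ### Auxiliary lemmas -/

/-- `G` plus `k` isolated vertices is realizable as the competition graph of a DAG. -/
def Realizes {V : Type*} (G : SimpleGraph V) (k : ℕ) : Prop :=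
  ∃ D : (V ⊕ Fin k) → (V ⊕ Fin k) → Prop,
    IsDagRel D ∧ competitionGraph D = addIsolated G k

lemma isDagRel_of_rank {W : Type*} (D : W → W → Prop) (r : W → ℕ)
    (h : ∀ a b, D a b → r a < r b) : IsDagRel D := by
  intro w hw
  have key : ∀ a b, Relation.TransGen D a b → r a < r b := by
    intro a b hab
    induction hab with
    | single h1 => exact h _ _ h1
    | tail _ h2 ih => exact ih.trans (h _ _ h2)
  exact lt_irrefl _ (key w w hw)

lemma exists_rank {W : Type*} [Fintype W] (D : W → W → Prop) (hD : IsDagRel D) :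
    ∃ r : W → ℕ, ∀ a b, D a b → r a < r b := by
  refine ⟨fun x => {y | Relation.TransGen D y x}.ncard, fun a b hab => ?_⟩
  apply Set.ncard_lt_ncard
  · constructor
    · intro y hy
      exact Relation.TransGen.tail hy hab
    · intro hsub
      have : a ∈ {y | Relation.TransGen D y b} := Relation.TransGen.single hab
      exact hD a (hsub this)
  · exact Set.toFinite _

lemma realizes_succ {V : Type*} (G : SimpleGraph V) (k : ℕ) (h : Realizes G k) :
    Realizes G (k + 1) := by
  obtain ⟨D, hdag, hcomp⟩ := h
  classical
  set emb : V ⊕ Fin k → V ⊕ Fin (k + 1) := Sum.map id Fin.castSucc with hemb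
  have hinj : Function.Injective emb :=
    Sum.map_injective.2 ⟨Function.injective_id, Fin.castSucc_injective k⟩
  refine ⟨fun a b => ∃ x y, a = emb x ∧ b = emb y ∧ D x y, ?_, ?_⟩
  · intro w hw
    have step : ∀ a b, (∃ x y, a = emb x ∧ b = emb y ∧ D x y) →
        ∃ x y, a = emb x ∧ b = emb y ∧ Relation.TransGen D x y := by
      rintro a b ⟨x, y, rfl, rfl, h⟩
      exact ⟨x, y, rfl, rfl, Relation.TransGen.single h⟩
    have key : ∀ a b, Relation.TransGen (fun a b => ∃ x y, a = emb x ∧ b = emb y ∧ D x y) a b →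
        ∃ x y, a = emb x ∧ b = emb y ∧ Relation.TransGen D x y := by
      intro a b hab
      induction hab with
      | single h1 => exact step _ _ h1
      | tail _ h2 ih =>
        obtain ⟨x, y, rfl, rfl, hxy⟩ := ih
        obtain ⟨y', z, hy', rfl, hyz⟩ := h2
        cases hinj hy'
        exact ⟨x, z, rfl, rfl, hxy.tail hyz⟩
    obtain ⟨x, y, hx, hy, hxy⟩ := key w w hw
    rw [hx] at hy
    cases hinj hy
    exact hdag x hxy
  · ext a b
    constructor
    · rintro ⟨hab, t, ⟨x, w, rfl, rfl, hxw⟩, ⟨y, w', hy, hw', hyw⟩⟩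
      cases hinj hw'
      have hxy : x ≠ y := by rintro rfl; exact hab hy.symm
      have : (competitionGraph D).Adj x y := ⟨hxy, w, hxw, hyw⟩
      rw [hcomp] at this
      obtain ⟨u, u', rfl, hy', hadj⟩ := this
      subst hy hy'
      exact ⟨u, u', rfl, rfl, hadj⟩
    · rintro ⟨u, u', rfl, rfl, hadj⟩
      have : (addIsolated G k).Adj (Sum.inl u) (Sum.inl u') := ⟨u, u', rfl, rfl, hadj⟩
      rw [← hcomp] at this
      obtain ⟨hne, w, h1, h2⟩ := this
      refine ⟨by simp [hadj.ne], emb w, ⟨Sum.inl u, w, rfl, rfl, h1⟩,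
        ⟨Sum.inl u', w, rfl, rfl, h2⟩⟩

lemma realizes_add {V : Type*} (G : SimpleGraph V) (k j : ℕ) (h : Realizes G k) :
    Realizes G (k + j) := by
  induction j with
  | zero => exact h
  | succ n ih => exact realizes_succ G (k + n) ih

lemma realizes_exists {V : Type*} [Fintype V] (G : SimpleGraph V) :
    Realizes G (Fintype.card (V × V)) := by
  classical
  set k := Fintype.card (V × V)
  set e : V × V ≃ Fin k := Fintype.equivFin (V × V)
  refine ⟨fun a t => ∃ p : V × V, G.Adj p.1 p.2 ∧ t = Sum.inr (e p) ∧
      (a = Sum.inl p.1 ∨ a = Sum.inl p.2), ?_, ?_⟩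
  · apply isDagRel_of_rank _ (fun x => Sum.elim (fun _ => 0) (fun _ => 1) x)
    rintro a b ⟨p, hp, rfl, (rfl | rfl)⟩ <;> simp
  · ext a b
    constructor
    · rintro ⟨hab, t, ⟨p, hp, rfl, hap⟩, ⟨q, hq, htq, hbq⟩⟩
      have hpq : p = q := e.injective (Sum.inr.inj htq)
      subst hpq
      rcases hap with rfl | rfl <;> rcases hbq with rfl | rfl
      · exact absurd rfl hab
      · exact ⟨p.1, p.2, rfl, rfl, hp⟩
      · exact ⟨p.2, p.1, rfl, rfl, hp.symm⟩
      · exact absurd rfl hab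
    · rintro ⟨u, u', rfl, rfl, hadj⟩
      refine ⟨by simp [hadj.ne], Sum.inr (e (u, u')), ⟨(u, u'), hadj, rfl, Or.inl rfl⟩,
        ⟨(u, u'), hadj, rfl, Or.inr rfl⟩⟩

lemma exists_clique_defect [Fintype V] (G : SimpleGraph V) (v : V) :
    ∃ S T : Finset V, G.IsClique ↑S ∧ ↑S ⊆ G.neighborSet v ∧
      (↑S ∪ ↑T : Set V) = G.neighborSet v ∧ Disjoint S T ∧ T.card = defect G v := by
  classical
  set A := {n | ∃ s : Finset V, G.IsNClique n s ∧ ↑s ⊆ G.neighborSet v} with hA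
  have h0 : (0 : ℕ) ∈ A := ⟨∅, by simp, by simp⟩
  have hbdd : BddAbove A := by
    refine ⟨Fintype.card V, fun n hn => ?_⟩
    obtain ⟨s, hs, -⟩ := hn
    rw [← hs.2]
    exact Finset.card_le_univ s
  have hmem : sSup A ∈ A := Nat.sSup_mem ⟨0, h0⟩ hbdd
  obtain ⟨S, hScl, hSN⟩ := hmem
  have hfin : (G.neighborSet v).Finite := Set.toFinite _
  have hsub : S ⊆ hfin.toFinset := by
    intro x hx
    rw [Set.Finite.mem_toFinset]
    exact hSN hx
  refine ⟨S, hfin.toFinset \ S, hScl.1, hSN, ?_, Finset.disjoint_sdiff, ?_⟩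
  · rw [← Finset.coe_union, Finset.union_sdiff_of_subset hsub, Set.Finite.coe_toFinset]
  · rw [Finset.card_sdiff_of_subset hsub, defect, neighborCliqueNumber, ← hA, hScl.2,
      Set.ncard_eq_toFinset_card _ hfin]

lemma realizes_main [Fintype V] (G : SimpleGraph V) (v : V) (m : ℕ) (hm1 : 0 < m)
    (hG' : Realizes (G.induce {u : V | u ≠ v}) m)
    (S T : Finset V) (hScl : G.IsClique ↑S) (hSN : ↑S ⊆ G.neighborSet v)
    (hUnion : (↑S ∪ ↑T : Set V) = G.neighborSet v) (hdisj : Disjoint S T) :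
    Realizes G (m + T.card) := by
  classical
  set V' := {u : V | u ≠ v} with hV'
  obtain ⟨D', hdag', hcomp'⟩ := hG'
  set z : ↥V' ⊕ Fin m := Sum.inr ⟨0, hm1⟩ with hz
  set φ : ↥V' ⊕ Fin m → V ⊕ Fin (m + T.card) :=
    Sum.map Subtype.val (Fin.castAdd T.card) with hφ
  have hφinj : Function.Injective φ :=
    Sum.map_injective.2 ⟨Subtype.val_injective, Fin.castAdd_injective _ _⟩
  set τ : ↥T → Fin (m + T.card) := fun u => Fin.natAdd m (T.equivFin u) with hτ
  have hτinj : Function.Injective τ := by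
    intro a b h
    apply T.equivFin.injective
    have := congrArg Fin.val h
    simp [hτ] at this
    exact Fin.val_injective this
  -- basic distinctness facts
  have hφv : ∀ x, φ x ≠ Sum.inl v := by
    rintro (⟨u, hu⟩ | i) h
    · exact hu (Sum.inl.inj h)
    · exact Sum.inr_ne_inl h
  have hφτ : ∀ x u, φ x ≠ Sum.inr (τ u) := by
    rintro (⟨u, hu⟩ | i) w h
    · exact Sum.inl_ne_inr h
    · have := congrArg Fin.val (Sum.inr.inj h)
      simp [hτ] at this
      omega
  have hvφz : Sum.inl v ≠ φ z := fun h => Sum.inl_ne_inr h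
  have hvτ : ∀ u, Sum.inl v ≠ Sum.inr (τ u) := fun u h => Sum.inl_ne_inr h
  -- neighbors of v
  have hSadj : ∀ s ∈ S, G.Adj v s := fun s hs => hSN hs
  have hTadj : ∀ u ∈ T, G.Adj v u := by
    intro u hu
    have : u ∈ (↑S ∪ ↑T : Set V) := Or.inr hu
    rw [hUnion] at this
    exact this
  have hSv : ∀ s ∈ S, s ≠ v := fun s hs => (hSadj s hs).ne'
  have hTv : ∀ u ∈ T, u ≠ v := fun u hu => (hTadj u hu).ne'
  -- the digraph
  set D : (V ⊕ Fin (m + T.card)) → (V ⊕ Fin (m + T.card)) → Prop := fun a b =>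
    (∃ x y, a = φ x ∧ b = φ y ∧ x ≠ z ∧ y ≠ z ∧ D' x y) ∨
    (∃ x, a = φ x ∧ x ≠ z ∧ D' x z ∧ b = Sum.inl v) ∨
    (b = φ z ∧ (a = Sum.inl v ∨ ∃ s ∈ S, a = Sum.inl s)) ∨
    (∃ u : ↥T, b = Sum.inr (τ u) ∧ (a = Sum.inl v ∨ a = Sum.inl ↑u)) with hD
  -- characterization of predators of each kind of vertex
  have hch1 : ∀ a y, y ≠ z → D a (φ y) → ∃ x, a = φ x ∧ x ≠ z ∧ D' x y := by
    rintro a y hyz (⟨x, y', rfl, hb, hx, hy', hd⟩ | ⟨x, rfl, hx, hd, hb⟩ |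
      ⟨hb, -⟩ | ⟨u, hb, -⟩)
    · cases hφinj hb; exact ⟨x, rfl, hx, hd⟩
    · exact absurd hb.symm (hφv y).symm
    · exact absurd (hφinj hb) hyz
    · exact absurd hb (hφτ y u)
  have hch2 : ∀ a, D a (Sum.inl v) → ∃ x, a = φ x ∧ x ≠ z ∧ D' x z := by
    rintro a (⟨x, y', rfl, hb, hx, hy', hd⟩ | ⟨x, rfl, hx, hd, hb⟩ |
      ⟨hb, -⟩ | ⟨u, hb, -⟩)
    · exact absurd hb (hφv y').symm
    · exact ⟨x, rfl, hx, hd⟩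
    · exact absurd hb hvφz
    · exact absurd hb (hvτ u)
  have hch3 : ∀ a, D a (φ z) → a = Sum.inl v ∨ ∃ s ∈ S, a = Sum.inl s := by
    rintro a (⟨x, y', rfl, hb, hx, hy', hd⟩ | ⟨x, rfl, hx, hd, hb⟩ |
      ⟨hb, ha⟩ | ⟨u, hb, -⟩)
    · exact absurd (hφinj hb) hy'.symm
    · exact absurd hb hvφz.symm
    · exact ha
    · exact absurd hb (hφτ z u)
  have hch4 : ∀ a u, D a (Sum.inr (τ u)) → a = Sum.inl v ∨ a = Sum.inl ↑u := by
    rintro a u (⟨x, y', rfl, hb, hx, hy', hd⟩ | ⟨x, rfl, hx, hd, hb⟩ |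
      ⟨hb, -⟩ | ⟨u', hb, ha⟩)
    · exact absurd hb (hφτ y' u).symm
    · exact absurd hb (hvτ u).symm
    · exact absurd hb (hφτ z u).symm
    · cases hτinj (Sum.inr.inj hb); exact ha
  refine ⟨D, ?_, ?_⟩
  · -- acyclicity via a rank function
    haveI : Fintype ↥V' := Fintype.ofFinite _
    obtain ⟨r, hr⟩ := exists_rank D' hdag'
    set B := Finset.univ.sup r with hB
    have hrB : ∀ x, r x ≤ B := fun x => Finset.le_sup (Finset.mem_univ x)
    set r' : V ⊕ Fin (m + T.card) → ℕ :=
      Sum.elim (fun u => if h : u = v then B + 2 else 1 + r (Sum.inl ⟨u, h⟩))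
        (fun j => if h : (j : ℕ) < m then
          (if (j : ℕ) = 0 then B + 3 else 1 + r (Sum.inr ⟨j, h⟩)) else B + 3) with hr'
    have hr'φ : ∀ x, x ≠ z → r' (φ x) = 1 + r x := by
      rintro (⟨u, hu⟩ | i) hx
      · simp only [hφ, Sum.map_inl, id, hr', Sum.elim_inl]
        split_ifs with h
        · exact absurd h hu
        · rfl
      · have hi0 : (i : ℕ) ≠ 0 := by
          intro h0
          apply hx
          rw [hz]
          congr 1
          exact Fin.ext h0
        simp only [hφ, Sum.map_inr, hr', Sum.elim_inr, Fin.coe_castAdd]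
        rw [dif_pos i.isLt, if_neg hi0]
    have hr'φle : ∀ x, x ≠ z → r' (φ x) ≤ B + 1 := by
      intro x hx
      rw [hr'φ x hx]
      have := hrB x
      omega
    have hr'v : r' (Sum.inl v) = B + 2 := by
      simp only [hr', Sum.elim_inl]
      split_ifs with h
      · rfl
      · exact absurd (by trivial) h
    have hr'z : r' (φ z) = B + 3 := by
      simp only [hφ, hz, Sum.map_inr, hr', Sum.elim_inr, Fin.coe_castAdd]
      split_ifs <;> first | rfl | omega | simp_all
    have hr'τ : ∀ u, r' (Sum.inr (τ u)) = B + 3 := by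
      intro u
      simp only [hr', Sum.elim_inr, hτ, Fin.coe_natAdd]
      split_ifs <;> first | rfl | omega | simp_all
    have hr'S : ∀ s ∈ S, r' (Sum.inl s) ≤ B + 1 := by
      intro s hs
      have : Sum.inl s = φ (Sum.inl ⟨s, hSv s hs⟩) := rfl
      rw [this]
      exact hr'φle _ (by simp [hz])
    apply isDagRel_of_rank D r'
    rintro a b (⟨x, y, rfl, rfl, hx, hy, hd⟩ | ⟨x, rfl, hx, hd, rfl⟩ |
      ⟨rfl, (rfl | ⟨s, hs, rfl⟩)⟩ | ⟨u, rfl, (rfl | rfl)⟩)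
    · rw [hr'φ x hx, hr'φ y hy]
      exact Nat.add_lt_add_left (hr x y hd) 1
    · have := hr'φle x hx
      omega
    · omega
    · have := hr'S s hs
      omega
    · rw [hr'v, hr'τ u]
      omega
    · have : r' (Sum.inl ↑u) ≤ B + 1 := by
        have h1 : (↑u : V) ≠ v := hTv ↑u u.2
        have : Sum.inl (↑u : V) = φ (Sum.inl ⟨↑u, h1⟩) := rfl
        rw [this]
        exact hr'φle _ (by simp [hz])
      rw [hr'τ u]
      omega
  · -- competition graph is G with m + T.card isolated vertices
    have hinduce : ∀ (a b : ↥V'), (G.induce V').Adj a b ↔ G.Adj ↑a ↑b := by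
      intro a b; rfl
    ext a b
    constructor
    · rintro ⟨hab, t, h1, h2⟩
      rcases h1 with (⟨x, y, rfl, rfl, hx, hy, hd⟩ | ⟨x, rfl, hx, hd, ht⟩ |
        ⟨ht, ha⟩ | ⟨u, ht, ha⟩)
      · -- common prey of the first kind
        obtain ⟨x', hb, hx', hd'⟩ := hch1 b y hy h2
        subst hb
        have hxx' : x ≠ x' := fun h => hab (by rw [h])
        have hC : (competitionGraph D').Adj x x' := ⟨hxx', y, hd, hd'⟩
        rw [hcomp'] at hC
        obtain ⟨u, u', rfl, rfl, hadj⟩ := hC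
        exact ⟨↑u, ↑u', rfl, rfl, (hinduce u u').1 hadj⟩
      · subst ht
        obtain ⟨x', hb, hx', hd'⟩ := hch2 b h2
        subst hb
        have hxx' : x ≠ x' := fun h => hab (by rw [h])
        have hC : (competitionGraph D').Adj x x' := ⟨hxx', z, hd, hd'⟩
        rw [hcomp'] at hC
        obtain ⟨u, u', rfl, rfl, hadj⟩ := hC
        exact ⟨↑u, ↑u', rfl, rfl, (hinduce u u').1 hadj⟩
      · subst ht
        have hb := hch3 b h2
        rcases ha with rfl | ⟨s, hs, rfl⟩ <;> rcases hb with rfl | ⟨s', hs', rfl⟩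
        · exact absurd rfl hab
        · exact ⟨v, s', rfl, rfl, hSadj s' hs'⟩
        · exact ⟨s, v, rfl, rfl, (hSadj s hs).symm⟩
        · have hss' : s ≠ s' := fun h => hab (by rw [h])
          exact ⟨s, s', rfl, rfl, hScl hs hs' hss'⟩
      · subst ht
        have hb := hch4 b u h2
        rcases ha with rfl | rfl <;> rcases hb with rfl | rfl
        · exact absurd rfl hab
        · exact ⟨v, ↑u, rfl, rfl, hTadj ↑u u.2⟩
        · exact ⟨↑u, v, rfl, rfl, (hTadj ↑u u.2).symm⟩
        · exact absurd rfl hab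
    · rintro ⟨u, u', rfl, rfl, hadj⟩
      have hne : (Sum.inl u : V ⊕ Fin (m + T.card)) ≠ Sum.inl u' := by
        simp [hadj.ne]
      refine ⟨hne, ?_⟩
      -- helper: edges incident to v
      have hvedge : ∀ w, G.Adj v w →
          ∃ t, D (Sum.inl v) t ∧ D (Sum.inl w) t := by
        intro w hw
        have : w ∈ (↑S ∪ ↑T : Set V) := by rw [hUnion]; exact hw
        rcases this with hwS | hwT
        · exact ⟨φ z, Or.inr (Or.inr (Or.inl ⟨rfl, Or.inl rfl⟩)),
            Or.inr (Or.inr (Or.inl ⟨rfl, Or.inr ⟨w, hwS, rfl⟩⟩))⟩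
        · exact ⟨Sum.inr (τ ⟨w, hwT⟩),
            Or.inr (Or.inr (Or.inr ⟨⟨w, hwT⟩, rfl, Or.inl rfl⟩)),
            Or.inr (Or.inr (Or.inr ⟨⟨w, hwT⟩, rfl, Or.inr rfl⟩))⟩
      by_cases hu : u = v
      · subst hu
        exact hvedge u' hadj
      · by_cases hu' : u' = v
        · subst hu'
          obtain ⟨t, h1, h2⟩ := hvedge u hadj.symm
          exact ⟨t, h2, h1⟩
        · -- both in G - v
          have hadj' : (G.induce V').Adj ⟨u, hu⟩ ⟨u', hu'⟩ := (hinduce _ _).2 hadj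
          have hC : (addIsolated (G.induce V') m).Adj (Sum.inl ⟨u, hu⟩) (Sum.inl ⟨u', hu'⟩) :=
            ⟨⟨u, hu⟩, ⟨u', hu'⟩, rfl, rfl, hadj'⟩
          rw [← hcomp'] at hC
          obtain ⟨hne', w, hw1, hw2⟩ := hC
          have hxz : (Sum.inl ⟨u, hu⟩ : ↥V' ⊕ Fin m) ≠ z := by simp [hz]
          have hx'z : (Sum.inl ⟨u', hu'⟩ : ↥V' ⊕ Fin m) ≠ z := by simp [hz]
          by_cases hwz : w = z
          · subst hwz
            exact ⟨Sum.inl v, Or.inr (Or.inl ⟨Sum.inl ⟨u, hu⟩, rfl, hxz, hw1, rfl⟩),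
              Or.inr (Or.inl ⟨Sum.inl ⟨u', hu'⟩, rfl, hx'z, hw2, rfl⟩)⟩
          · exact ⟨φ w, Or.inl ⟨Sum.inl ⟨u, hu⟩, w, rfl, rfl, hxz, hwz, hw1⟩,
              Or.inl ⟨Sum.inl ⟨u', hu'⟩, w, rfl, rfl, hx'z, hwz, hw2⟩⟩

/-- For any vertex `v` of a graph on at least two vertices,
`cp(G) ≤ max {1, cp(G - v)} + defect(v)`. -/
theorem competitionNumber_le_of_deleteVertex [Fintype V] (G : SimpleGraph V)
    (hcard : 2 ≤ Fintype.card V) (v : V) :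
    competitionNumber G ≤
      max 1 (competitionNumber (G.induce {u : V | u ≠ v})) + defect G v := by
  classical
  obtain ⟨S, T, hScl, hSN, hUnion, hdisj, hTcard⟩ := exists_clique_defect G v
  set G' := G.induce {u : V | u ≠ v} with hG'def
  haveI : Fintype ↥{u : V | u ≠ v} := Fintype.ofFinite _
  have hne : {k | Realizes G' k}.Nonempty := ⟨_, realizes_exists G'⟩
  have hcp : Realizes G' (competitionNumber G') := by
    have h1 : sInf {k | Realizes G' k} ∈ {k | Realizes G' k} := Nat.sInf_mem hne
    exact h1
  set m := max 1 (competitionNumber G') with hm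
  have hle : competitionNumber G' ≤ m := le_max_right _ _
  have hm1 : 0 < m := le_max_left 1 _
  have hRm : Realizes G' m := by
    obtain ⟨j, hj⟩ := Nat.le.dest hle
    rw [← hj]
    exact realizes_add G' _ j hcp
  have hmain := realizes_main G v m hm1 hRm S T hScl hSN hUnion hdisj
  rw [hTcard] at hmain
  exact Nat.sInf_le hmain

end CompKim
end

section
/- Given a clique edge covering C_1,...,C_n of an n-vertex graph G and a vertex ordering v_1,...,v_n such that v_i ∉ C_j whenever i ≥ j + 2, the reversed sequence C_n,...,C_1 incrementally covers V(G). -/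
namespace CompKim

open SimpleGraph

variable {V : Type*}

/-- A sequence of `t` cliques `C` incrementally covers `V'`: `|V'| ≥ t`, the cliques
cover all edges incident with `V'`, and for every `i ∈ {1, …, t-1}` the first `i + 1`
cliques cover the vertex stars of at least `i` distinct vertices of `V'`. -/
def IncrementallyCovers (G : SimpleGraph V) {t : ℕ} (C : Fin t → Finset V)
    (V' : Finset V) : Prop :=
  t ≤ V'.card ∧
  (∀ e ∈ G.edgeSet, (∃ x ∈ e, x ∈ V') → ∃ i, ∀ x ∈ e, x ∈ C i) ∧
  (∀ i : ℕ, 1 ≤ i → i ≤ t - 1 →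
    ∃ W : Finset V, W ⊆ V' ∧ i ≤ W.card ∧
      ∀ w ∈ W, ∀ e ∈ G.edgeSet, w ∈ e → ∃ j : Fin t, (j : ℕ) < i + 1 ∧ ∀ x ∈ e, x ∈ C j)

/-- Given a clique edge covering `C₁, …, Cₙ` and a vertex ordering `v₁, …, vₙ` such that
`vᵢ ∉ Cⱼ` whenever `i ≥ j + 2`, the reversed sequence `Cₙ, …, C₁` incrementally covers
the vertex set. -/
theorem reversed_covering_incrementally_covers [Fintype V] (G : SimpleGraph V)
    (C : Fin (Fintype.card V) → Finset V) (hclique : ∀ i, G.IsClique (C i : Set V))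
    (hcover : ∀ e ∈ G.edgeSet, ∃ i, ∀ x ∈ e, x ∈ C i)
    (v : Fin (Fintype.card V) → V) (hbij : Function.Bijective v)
    (horder : ∀ i j : Fin (Fintype.card V), (j : ℕ) + 2 ≤ (i : ℕ) → v i ∉ C j) :
    IncrementallyCovers G (fun i => C i.rev) Finset.univ := by
  classical
  refine ⟨by simp, ?_, ?_⟩
  · intro e he _
    obtain ⟨m, hm⟩ := hcover e he
    exact ⟨m.rev, by simpa using hm⟩
  · intro i hi1 hi2
    have hin : i + 1 ≤ Fintype.card V := by omega
    refine ⟨Finset.image v (Finset.Ici (⟨Fintype.card V - i, by omega⟩ : Fin (Fintype.card V))),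
      Finset.subset_univ _, ?_, ?_⟩
    · rw [Finset.card_image_of_injective _ hbij.1, Fin.card_Ici]
      simp only [Fin.val_mk]
      omega
    · intro w hw e he hwe
      simp only [Finset.mem_image, Finset.mem_Ici] at hw
      obtain ⟨k, hk, rfl⟩ := hw
      have hk' : Fintype.card V - i ≤ (k : ℕ) := hk
      obtain ⟨m, hm⟩ := hcover e he
      have hvm : v k ∈ C m := hm _ hwe
      have hkm : ¬ ((m : ℕ) + 2 ≤ (k : ℕ)) := fun h => horder k m h hvm
      refine ⟨m.rev, ?_, by simpa using hm⟩
      have := m.rev.is_lt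
      have := m.is_lt
      simp only [Fin.val_rev]
      omega

end CompKim
end

section
/- If G is a vertex-minimal quasi-line graph with competition number greater than 2, then no sequence of cliques incrementally covers any nonempty subset of the vertices of G. -/
namespace CompKim

open SimpleGraph

variable {V : Type*}

/-- A quasi-line graph: the neighborhood of every vertex can be covered by at most two
cliques. -/
def QuasiLine {α : Type*} (G : SimpleGraph α) : Prop :=
  ∀ v : α, ∃ s t : Set α, G.IsClique s ∧ G.IsClique t ∧ G.neighborSet v = s ∪ t

open Finset in
lemma exists_topological_index {U : Type*} [Fintype U] (D : U → U → Prop)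
    (hdag : IsDagRel D) :
    ∃ idx : U → ℕ, (∀ a, idx a < Fintype.card U) ∧ Function.Injective idx ∧
      (∀ c < Fintype.card U, ∃ a, idx a = c) ∧ (∀ a b, D a b → idx b < idx a) := by
  classical
  -- partial order: x ≤ y iff y reaches x
  set le : U → U → Prop := fun x y => x = y ∨ Relation.TransGen D y x with hle
  haveI : IsPartialOrder U le :=
    { refl := fun x => Or.inl rfl
      trans := by
        intro x y z hxy hyz
        rcases hxy with rfl | hxy
        · exact hyz
        · rcases hyz with rfl | hyz
          · exact Or.inr hxy
          · exact Or.inr (hyz.trans hxy)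
      antisymm := by
        intro x y hxy hyx
        rcases hxy with rfl | hxy
        · rfl
        · rcases hyx with rfl | hyx
          · rfl
          · exact absurd (hxy.trans hyx) (hdag y) }
  obtain ⟨s, hso, hsub⟩ := extend_partialOrder le
  have hsrefl : ∀ x, s x x := fun x => hsub x x (Or.inl rfl)
  set f : U → ℕ := fun a => (univ.filter (fun x => s x a)).card with hf
  have hstrict : ∀ x y, s x y → x ≠ y → f x < f y := by
    intro x y hxy hne
    apply Finset.card_lt_card
    constructor
    · intro z hz
      simp only [mem_filter, mem_univ, true_and] at hz ⊢
      exact hso.trans z x y hz hxy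
    · intro hsubset
      have := hsubset (by simp [hsrefl y] : y ∈ univ.filter (fun x => s x y))
      simp only [mem_filter, mem_univ, true_and] at this
      exact hne (hso.antisymm x y hxy this)
  have hfinj : Function.Injective f := by
    intro x y hxy
    by_contra hne
    rcases hso.total x y with h | h
    · exact absurd hxy (Nat.ne_of_lt (hstrict x y h hne))
    · exact absurd hxy.symm (Nat.ne_of_lt (hstrict y x h (Ne.symm hne)))
  -- compress f into a bijection onto Fin (card U)
  set idx : U → ℕ := fun a => (univ.filter (fun x => f x < f a)).card with hidx
  have hmono : ∀ x y, f x < f y → idx x < idx y := by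
    intro x y h
    apply Finset.card_lt_card
    constructor
    · intro z hz
      simp only [mem_filter, mem_univ, true_and] at hz ⊢
      exact hz.trans h
    · intro hsubset
      have := hsubset (by simp [h] : x ∈ univ.filter (fun z => f z < f y))
      simp only [mem_filter, mem_univ, true_and] at this
      exact lt_irrefl _ this
  have hidxinj : Function.Injective idx := by
    intro x y hxy
    by_contra hne
    have : f x ≠ f y := fun h => hne (hfinj h)
    rcases lt_or_gt_of_ne this with h | h
    · exact absurd hxy (Nat.ne_of_lt (hmono x y h))
    · exact absurd hxy.symm (Nat.ne_of_lt (hmono y x h))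
  have hbound : ∀ a, idx a < Fintype.card U := by
    intro a
    have : univ.filter (fun x => f x < f a) ⊆ univ.erase a := by
      intro z hz
      simp only [mem_filter, mem_univ, true_and] at hz
      simp only [mem_erase, mem_univ, and_true]
      intro h; subst h; exact lt_irrefl _ hz
    calc idx a ≤ (univ.erase a).card := Finset.card_le_card this
      _ < univ.card := Finset.card_erase_lt_of_mem (mem_univ a)
      _ = Fintype.card U := Finset.card_univ
  have hsurj : ∀ c < Fintype.card U, ∃ a, idx a = c := by
    -- injective into Fin n with card equal, hence surjective
    haveI : Nonempty U ∨ Fintype.card U = 0 := by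
      rcases isEmpty_or_nonempty U with h | h
      · exact Or.inr (Fintype.card_eq_zero)
      · exact Or.inl h
    intro c hc
    set g : U → Fin (Fintype.card U) := fun a => ⟨idx a, hbound a⟩ with hg
    have hginj : Function.Injective g := by
      intro x y hxy
      exact hidxinj (congrArg Fin.val hxy)
    have hgsurj : Function.Surjective g :=
      ((Fintype.bijective_iff_injective_and_card g).mpr ⟨hginj, by simp⟩).2
    obtain ⟨a, ha⟩ := hgsurj ⟨c, hc⟩
    exact ⟨a, congrArg Fin.val ha⟩
  refine ⟨idx, hbound, hidxinj, hsurj, ?_⟩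
  intro a b hD
  have hne : b ≠ a := by
    rintro rfl
    exact hdag b (Relation.TransGen.single hD)
  have hs : s b a := hsub b a (Or.inr (Relation.TransGen.single hD))
  exact hmono b a (hstrict b a hs hne)

lemma exists_realization {W : Type*} [Fintype W] (G : SimpleGraph W) :
    ∃ k, ∃ D : (W ⊕ Fin k) → (W ⊕ Fin k) → Prop,
      IsDagRel D ∧ competitionGraph D = addIsolated G k := by
  classical
  set k := G.edgeFinset.card with hk
  set e : Fin k ≃ G.edgeFinset := G.edgeFinset.equivFin.symm with he
  set D : (W ⊕ Fin k) → (W ⊕ Fin k) → Prop :=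
    fun x y => ∃ (u : W) (i : Fin k), x = Sum.inl u ∧ y = Sum.inr i ∧ u ∈ (e i : Sym2 W)
    with hD
  have hstep : ∀ a b, Relation.TransGen D a b → D a b := by
    intro a b h
    induction h with
    | single h => exact h
    | tail h1 h2 ih =>
      obtain ⟨u, i, rfl, rfl, -⟩ := ih
      obtain ⟨u', i', h', -⟩ := h2
      exact absurd h' (by simp)
  refine ⟨k, D, ?_, ?_⟩
  · intro w hw
    obtain ⟨u, i, h1, h2, -⟩ := hstep _ _ hw
    rw [h1] at h2
    exact absurd h2 (by simp)
  · ext a b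
    constructor
    · rintro ⟨hne, y, ⟨u, i, rfl, rfl, hu⟩, ⟨v, i', hv1, hv2, hv⟩⟩
      have hii : i' = i := (Sum.inr.inj hv2).symm
      rw [hii] at hv
      subst hv1
      have huv : u ≠ v := fun h => hne (by rw [h])
      have hmem : (e i : Sym2 W) = s(u, v) := (Sym2.mem_and_mem_iff huv).mp ⟨hu, hv⟩
      have : s(u, v) ∈ G.edgeSet := by
        rw [← hmem]
        exact SimpleGraph.mem_edgeFinset.mp (e i).2
      exact ⟨u, v, rfl, rfl, this⟩
    · rintro ⟨u, v, rfl, rfl, hadj⟩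
      have hmem : s(u, v) ∈ G.edgeFinset := SimpleGraph.mem_edgeFinset.mpr hadj
      refine ⟨by simp [hadj.ne], Sum.inr (e.symm ⟨s(u, v), hmem⟩), ?_, ?_⟩
      · exact ⟨u, _, rfl, rfl, by simp⟩
      · exact ⟨v, _, rfl, rfl, by simp⟩

open Finset in
lemma covering_of_realization {m k : ℕ} (hk : k ≤ 2) (H : SimpleGraph (Fin m))
    (D : (Fin m ⊕ Fin k) → (Fin m ⊕ Fin k) → Prop) (hdag : IsDagRel D)
    (heq : competitionGraph D = addIsolated H k) :
    ∃ C : Fin m → Finset (Fin m), (∀ j, H.IsClique (C j : Set (Fin m))) ∧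
      IncrementallyCovers H C Finset.univ := by
  classical
  obtain ⟨idx, hbound, hinj, hsurj, hstep⟩ := exists_topological_index D hdag
  have hcard : Fintype.card (Fin m ⊕ Fin k) = m + k := by simp
  rw [hcard] at hbound hsurj
  have hadj_of : ∀ (u v : Fin m) (y : Fin m ⊕ Fin k), u ≠ v →
      D (Sum.inl u) y → D (Sum.inl v) y → H.Adj u v := by
    intro u v y huv h1 h2
    have hco : (competitionGraph D).Adj (Sum.inl u) (Sum.inl v) :=
      ⟨by simp [huv], y, h1, h2⟩
    rw [heq] at hco
    obtain ⟨u', v', h1', h2', hadj⟩ := hco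
    cases Sum.inl.inj h1'
    cases Sum.inl.inj h2'
    exact hadj
  have hprey : ∀ u v : Fin m, H.Adj u v →
      ∃ y, D (Sum.inl u) y ∧ D (Sum.inl v) y := by
    intro u v h
    have hco : (addIsolated H k).Adj (Sum.inl u) (Sum.inl v) := ⟨u, v, rfl, rfl, h⟩
    rw [← heq] at hco
    exact hco.2
  have hbeta : ∀ (u v : Fin m) (y : Fin m ⊕ Fin k), u ≠ v →
      D (Sum.inl u) y → D (Sum.inl v) y → idx y < m := by
    intro u v y huv h1 h2
    have l1 := hstep _ _ h1
    have l2 := hstep _ _ h2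
    have lne : idx (Sum.inl u) ≠ idx (Sum.inl v) := fun h => huv (Sum.inl.inj (hinj h))
    have b1 := hbound (Sum.inl u)
    have b2 := hbound (Sum.inl v)
    omega
  set C : Fin m → Finset (Fin m) := fun j =>
    Finset.univ.filter (fun v => ∃ y, idx y = (j : ℕ) ∧ D (Sum.inl v) y) with hC
  have hmemC : ∀ (j : Fin m) (v : Fin m) (y : Fin m ⊕ Fin k),
      idx y = (j : ℕ) → D (Sum.inl v) y → v ∈ C j := by
    intro j v y h1 h2
    simp only [hC, mem_filter, mem_univ, true_and]
    exact ⟨y, h1, h2⟩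
  refine ⟨C, ?_, ?_, ?_, ?_⟩
  · -- cliques
    intro j u hu v hv huv
    simp only [hC, coe_filter, Set.mem_setOf_eq] at hu hv
    obtain ⟨-, y1, hy1, hD1⟩ := hu
    obtain ⟨-, y2, hy2, hD2⟩ := hv
    have : y2 = y1 := hinj (by rw [hy1, hy2])
    subst this
    exact hadj_of u v y2 huv hD1 hD2
  · -- t ≤ card
    simp
  · -- edge coverage
    intro e
    induction e using Sym2.ind with
    | _ a b =>
      intro he _
      have hadj : H.Adj a b := (SimpleGraph.mem_edgeSet H).mp he
      obtain ⟨y, h1, h2⟩ := hprey a b hadj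
      have hy : idx y < m := hbeta a b y hadj.ne h1 h2
      refine ⟨⟨idx y, hy⟩, ?_⟩
      intro x hx
      rcases Sym2.mem_iff.mp hx with rfl | rfl
      · exact hmemC _ x y rfl h1
      · exact hmemC _ x y rfl h2
  · -- incremental condition
    intro i hi1 hi2
    set W : Finset (Fin m) :=
      Finset.univ.filter (fun v => idx (Sum.inl v) < i + 2) with hW
    have hWcard : i ≤ W.card := by
      set B : Finset (Fin m ⊕ Fin k) :=
        Finset.univ.filter (fun x => idx x < i + 2) with hB
      have hlow : min (i + 2) (m + k) ≤ B.card := by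
        have := Finset.card_le_card_of_injOn
          (f := fun c : Fin (min (i + 2) (m + k)) =>
            Classical.choose (hsurj (c : ℕ) (lt_of_lt_of_le c.2 (min_le_right _ _))))
          (s := Finset.univ) (t := B) ?_ ?_
        · simpa using this
        · intro c _
          have hc := Classical.choose_spec (hsurj (c : ℕ) (lt_of_lt_of_le c.2 (min_le_right _ _)))
          simp only [hB, mem_coe, mem_filter, mem_univ, true_and]
          rw [hc]
          exact lt_of_lt_of_le c.2 (min_le_left _ _)
        · intro c1 _ c2 _ hcc
          have hc1 := Classical.choose_spec (hsurj (c1 : ℕ) (lt_of_lt_of_le c1.2 (min_le_right _ _)))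
          have hc2 := Classical.choose_spec (hsurj (c2 : ℕ) (lt_of_lt_of_le c2.2 (min_le_right _ _)))
          apply Fin.ext
          rw [← hc1, ← hc2]
          exact congrArg idx hcc
      have hup : B.card ≤ W.card + k := by
        have hsub : B ⊆ W.image Sum.inl ∪ (Finset.univ : Finset (Fin k)).image Sum.inr := by
          intro x hx
          simp only [hB, mem_filter, mem_univ, true_and] at hx
          rcases x with v | j
          · exact mem_union_left _ (mem_image_of_mem _ (by simp [hW, hx]))
          · exact mem_union_right _ (mem_image_of_mem _ (mem_univ j))
        calc B.card ≤ (W.image Sum.inl ∪ (Finset.univ : Finset (Fin k)).image Sum.inr).card :=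
              Finset.card_le_card hsub
          _ ≤ (W.image Sum.inl).card + ((Finset.univ : Finset (Fin k)).image Sum.inr).card :=
              Finset.card_union_le _ _
          _ ≤ W.card + k := by
              gcongr
              · exact le_of_eq (Finset.card_image_of_injective _ Sum.inl_injective)
              · calc ((Finset.univ : Finset (Fin k)).image Sum.inr).card
                    ≤ (Finset.univ : Finset (Fin k)).card := Finset.card_image_le
                  _ = k := by simp
      omega
    refine ⟨W, W.subset_univ, hWcard, ?_⟩
    intro w hw e
    induction e using Sym2.ind with
    | _ a b =>
      intro he hwe
      have hadj : H.Adj a b := (SimpleGraph.mem_edgeSet H).mp he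
      obtain ⟨y, h1, h2⟩ := hprey a b hadj
      have hy : idx y < m := hbeta a b y hadj.ne h1 h2
      simp only [hW, mem_filter, mem_univ, true_and] at hw
      have hylt : idx y < i + 1 := by
        rcases Sym2.mem_iff.mp hwe with rfl | rfl
        · have := hstep _ _ h1; omega
        · have := hstep _ _ h2; omega
      refine ⟨⟨idx y, hy⟩, hylt, ?_⟩
      intro x hx
      rcases Sym2.mem_iff.mp hx with rfl | rfl
      · exact hmemC _ x y rfl h1
      · exact hmemC _ x y rfl h2

lemma exists_injective_choice {α : Type*} [DecidableEq α] (F : ℕ → Finset α) :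
    ∀ r : ℕ, (∀ l < r, l + 1 ≤ (F l).card) →
      ∃ w : Fin r → α, Function.Injective w ∧ ∀ l : Fin r, w l ∈ F (l : ℕ) := by
  intro r
  induction r with
  | zero => exact fun _ => ⟨Fin.elim0, fun x => x.elim0, fun l => l.elim0⟩
  | succ r ih =>
    intro hF
    obtain ⟨w, hwinj, hwmem⟩ := ih (fun l hl => hF l (by omega))
    have hcard : ¬ F r ⊆ Finset.univ.image w := by
      intro hsub
      have h1 := Finset.card_le_card hsub
      have h2 : (Finset.univ.image w).card ≤ r :=
        le_trans Finset.card_image_le (by simp)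
      have h3 := hF r (by omega)
      omega
    obtain ⟨a, ha, hna⟩ := Finset.not_subset.mp hcard
    refine ⟨fun l => if h : (l : ℕ) < r then w ⟨l, h⟩ else a, ?_, ?_⟩
    · intro l1 l2 h12
      by_cases h1 : (l1 : ℕ) < r <;> by_cases h2 : (l2 : ℕ) < r <;>
        simp only [h1, h2, dite_true, dite_false] at h12
      · have := hwinj h12
        apply Fin.ext
        have := congrArg Fin.val this
        simpa using this
      · exact absurd (h12 ▸ Finset.mem_image_of_mem w (Finset.mem_univ _)) hna
      · exact absurd (h12 ▸ Finset.mem_image_of_mem w (Finset.mem_univ _)) hna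
      · apply Fin.ext
        have b1 := l1.2
        have b2 := l2.2
        omega
    · intro l
      by_cases h : (l : ℕ) < r
      · simp only [dif_pos h]
        exact hwmem ⟨l, h⟩
      · simp only [dif_neg h]
        have : (l : ℕ) = r := by have := l.2; omega
        rw [this]
        exact ha

open Finset in
lemma realization_of_covering {V : Type*} [Fintype V] (G : SimpleGraph V) {T : ℕ}
    (C : Fin T → Finset V) (hcl : ∀ j, G.IsClique (C j : Set V))
    (hcov : IncrementallyCovers G C Finset.univ) :
    ∃ D : (V ⊕ Fin 2) → (V ⊕ Fin 2) → Prop,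
      IsDagRel D ∧ competitionGraph D = addIsolated G 2 := by
  classical
  obtain ⟨-, hedge, hstar⟩ := hcov
  have hedge' : ∀ e ∈ G.edgeSet, ∃ j : Fin T, ∀ x ∈ e, x ∈ C j := by
    intro e
    induction e using Sym2.ind with
    | _ a b => intro he; exact hedge _ he ⟨a, by simp, Finset.mem_univ a⟩
  set F : ℕ → Finset V := fun l => Finset.univ.filter
    (fun v => ∀ e ∈ G.edgeSet, v ∈ e → ∃ j : Fin T, (j : ℕ) < l + 2 ∧ ∀ x ∈ e, x ∈ C j)
    with hF
  have hFcard : ∀ l < T - 1, l + 1 ≤ (F l).card := by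
    intro l hl
    obtain ⟨W, hWsub, hWcard, hWstar⟩ := hstar (l + 1) (by omega) (by omega)
    refine le_trans hWcard (Finset.card_le_card ?_)
    intro v hv
    simp only [hF, mem_filter, mem_univ, true_and]
    intro e he hve
    obtain ⟨j, hj, hjall⟩ := hWstar v hv e he hve
    exact ⟨j, by omega, hjall⟩
  obtain ⟨w, hwinj, hwmem⟩ := exists_injective_choice F (T - 1) hFcard
  have hwstar : ∀ l : Fin (T - 1), ∀ e ∈ G.edgeSet, w l ∈ e →
      ∃ j : Fin T, (j : ℕ) < (l : ℕ) + 2 ∧ ∀ x ∈ e, x ∈ C j := by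
    intro l e he hve
    have hmem := hwmem l
    simp only [hF, mem_filter, mem_univ, true_and] at hmem
    exact hmem e he hve
  set p : Fin T → (V ⊕ Fin 2) := fun j =>
    if h : (j : ℕ) < 2 then Sum.inr ⟨(j : ℕ), h⟩
    else Sum.inl (w ⟨(j : ℕ) - 2, by have := j.2; omega⟩) with hp
  have hpinj : Function.Injective p := by
    intro j1 j2 hj
    simp only [hp] at hj
    by_cases h1 : (j1 : ℕ) < 2 <;> by_cases h2 : (j2 : ℕ) < 2 <;>
      simp only [h1, h2, dite_true, dite_false] at hj
    · apply Fin.ext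
      have h3 := congrArg Fin.val (Sum.inr.inj hj)
      simpa using h3
    · exact absurd hj (by simp)
    · exact absurd hj (by simp)
    · have h3 := hwinj (Sum.inl.inj hj)
      rw [Fin.mk.injEq] at h3
      apply Fin.ext
      have b1 := j1.2
      have b2 := j2.2
      omega
  set ok : V → Fin T → Prop :=
    fun u j => ∀ l : Fin (T - 1), u = w l → (j : ℕ) < (l : ℕ) + 2 with hok
  set D : (V ⊕ Fin 2) → (V ⊕ Fin 2) → Prop := fun x y =>
    ∃ (j : Fin T) (u : V), x = Sum.inl u ∧ y = p j ∧ u ∈ C j ∧ ok u j with hD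
  set hgt : (V ⊕ Fin 2) → ℕ := Sum.elim
    (fun v => if hv : ∃ l, v = w l then ((Classical.choose hv : Fin (T - 1)) : ℕ) + 1 else T + 1)
    (fun _ => 0) with hhgt
  have hgtw : ∀ l : Fin (T - 1), hgt (Sum.inl (w l)) = (l : ℕ) + 1 := by
    intro l
    have hv : ∃ l', w l = w l' := ⟨l, rfl⟩
    simp only [hhgt, Sum.elim_inl, dif_pos hv]
    have hcs := Classical.choose_spec hv
    exact congrArg (fun z : Fin (T - 1) => (z : ℕ) + 1) (hwinj hcs).symm
  have hdec : ∀ x y, D x y → hgt y < hgt x := by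
    rintro x y ⟨j, u, rfl, rfl, hu, hoku⟩
    by_cases hv : ∃ l, u = w l
    · obtain ⟨l, rfl⟩ := hv
      rw [hgtw l]
      have hjl : (j : ℕ) < (l : ℕ) + 2 := hoku l rfl
      by_cases hc : (j : ℕ) < 2
      · simp only [hp, dif_pos hc, Sum.elim_inr, hhgt]
        omega
      · simp only [hp, dif_neg hc]
        rw [hgtw]
        simp only []
        omega
    · have hx : hgt (Sum.inl u) = T + 1 := by
        simp only [hhgt, Sum.elim_inl, dif_neg hv]
      rw [hx]
      by_cases hc : (j : ℕ) < 2
      · simp only [hp, dif_pos hc, Sum.elim_inr, hhgt]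
        omega
      · simp only [hp, dif_neg hc]
        rw [hgtw]
        simp only []
        have : ((j : ℕ) - 2) < T - 1 := by have := j.2; omega
        omega
  refine ⟨D, ?_, ?_⟩
  · -- DAG
    have htg : ∀ x y, Relation.TransGen D x y → hgt y < hgt x := by
      intro x y hxy
      induction hxy with
      | single h => exact hdec _ _ h
      | tail h1 h2 ih => exact lt_trans (hdec _ _ h2) ih
    intro x hx
    exact lt_irrefl _ (htg x x hx)
  · ext a b
    constructor
    · rintro ⟨hne, y, ⟨j1, u, rfl, hy1, hu, hoku⟩, ⟨j2, v, hbv, hy2, hv, hokv⟩⟩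
      subst hbv
      have hjj : p j1 = p j2 := by rw [← hy1, ← hy2]
      cases hpinj hjj
      have huv : u ≠ v := fun hh => hne (by rw [hh])
      exact ⟨u, v, rfl, rfl, hcl j1 (Finset.mem_coe.mpr hu) (Finset.mem_coe.mpr hv) huv⟩
    · rintro ⟨u, v, rfl, rfl, hadj⟩
      have hes : s(u, v) ∈ G.edgeSet := (SimpleGraph.mem_edgeSet G).mpr hadj
      obtain ⟨j, hj⟩ := hedge' _ hes
      set P : ℕ → Prop := fun n => ∃ hn : n < T, ∀ x ∈ s(u, v), x ∈ C ⟨n, hn⟩ with hPdef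
      have hP : ∃ n, P n := by
        refine ⟨(j : ℕ), j.2, ?_⟩
        intro x hx
        have := hj x hx
        simpa [Fin.eta] using this
      obtain ⟨hn0, hcov0⟩ := Nat.find_spec hP
      set j0 : Fin T := ⟨Nat.find hP, hn0⟩ with hj0
      have hok0 : ∀ x ∈ s(u, v), ok x j0 := by
        intro x hx l hxl
        by_contra hcon
        push_neg at hcon
        rw [hxl] at hx
        obtain ⟨j', hj'lt, hj'all⟩ := hwstar l (s(u, v)) hes hx
        have hPj' : P (j' : ℕ) := by
          refine ⟨j'.2, ?_⟩
          intro z hz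
          have := hj'all z hz
          simpa [Fin.eta] using this
        have hlt : (j' : ℕ) < Nat.find hP := by
          simp only [hj0] at hcon
          omega
        exact Nat.find_min hP hlt hPj'
      refine ⟨by simp [hadj.ne], p j0,
        ⟨j0, u, rfl, rfl, hcov0 u (by simp), hok0 u (by simp)⟩,
        ⟨j0, v, rfl, rfl, hcov0 v (by simp), hok0 v (by simp)⟩⟩

open Finset in
/-- A vertex-minimal quasi-line graph with competition number greater than `2` admits no
incremental clique covering of any nonempty subset of its vertices. -/
theorem no_incremental_covering_of_minimal [Fintype V] (G : SimpleGraph V)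
    (hql : QuasiLine G) (hcp : 2 < competitionNumber G)
    (hmin : ∀ m : ℕ, m < Fintype.card V → ∀ G' : SimpleGraph (Fin m),
      QuasiLine G' → competitionNumber G' ≤ 2) :
    ¬ ∃ (t : ℕ) (C : Fin t → Finset V) (V' : Finset V), V'.Nonempty ∧
      (∀ i, G.IsClique (C i : Set V)) ∧ IncrementallyCovers G C V' := by
  classical
  rintro ⟨t, C, V', hne, hCcl, hIC⟩
  set S : Finset V := V'ᶜ with hS
  set m : ℕ := S.card with hm
  have hmlt : m < Fintype.card V := by
    have h1 : 0 < V'.card := Finset.card_pos.mpr hne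
    have h2 : V'.card ≤ Fintype.card V := Finset.card_le_univ V'
    have h3 : S.card = Fintype.card V - V'.card := Finset.card_compl V'
    omega
  set eq : {x // x ∈ S} ≃ Fin m := S.equivFin with heq
  set q : Fin m → V := fun v => ((eq.symm v : V)) with hq
  have hqinj : Function.Injective q :=
    fun a b hab => eq.symm.injective (Subtype.coe_injective hab)
  have hqS : ∀ v, q v ∈ S := fun v => (eq.symm v).2
  have hqinv : ∀ (a : V) (ha : a ∈ S), q (eq ⟨a, ha⟩) = a := by
    intro a ha
    simp [hq]
  set H : SimpleGraph (Fin m) :=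
    { Adj := fun i j => G.Adj (q i) (q j)
      symm := ⟨fun i j hij => G.adj_symm hij⟩
      loopless := ⟨fun i h => G.loopless.irrefl _ h⟩ } with hH
  have hHadj : ∀ u v, H.Adj u v ↔ G.Adj (q u) (q v) := fun u v => Iff.rfl
  have hqlH : QuasiLine H := by
    intro i
    obtain ⟨s, t', hs, ht', hn⟩ := hql (q i)
    refine ⟨{j | q j ∈ s}, {j | q j ∈ t'}, ?_, ?_, ?_⟩
    · intro j hj k hk hjk
      exact hs hj hk (fun hc => hjk (hqinj hc))
    · intro j hj k hk hjk
      exact ht' hj hk (fun hc => hjk (hqinj hc))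
    · ext j
      have h1 : q j ∈ G.neighborSet (q i) ↔ q j ∈ s ∪ t' := by rw [hn]
      simp only [SimpleGraph.mem_neighborSet, Set.mem_union] at h1
      simp only [SimpleGraph.mem_neighborSet, Set.mem_union, Set.mem_setOf_eq]
      exact h1
  have hcpH : competitionNumber H ≤ 2 := hmin m hmlt H hqlH
  obtain ⟨k0, hk0⟩ := exists_realization H
  have hsetne : {k | ∃ D : (Fin m ⊕ Fin k) → (Fin m ⊕ Fin k) → Prop,
      IsDagRel D ∧ competitionGraph D = addIsolated H k}.Nonempty := ⟨k0, hk0⟩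
  have hmem : ∃ D : (Fin m ⊕ Fin (competitionNumber H)) → (Fin m ⊕ Fin (competitionNumber H)) → Prop,
      IsDagRel D ∧ competitionGraph D = addIsolated H (competitionNumber H) :=
    Nat.sInf_mem hsetne
  obtain ⟨D, hdag, heqD⟩ := hmem
  obtain ⟨CH, hCHcl, hCHcov⟩ := covering_of_realization hcpH H D hdag heqD
  -- merged covering
  set CC : Fin (t + m) → Finset V := fun j =>
    if h : (j : ℕ) < t then C ⟨(j : ℕ), h⟩
    else (CH ⟨(j : ℕ) - t, by have := j.2; omega⟩).image q
    with hCC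
  have hCClow : ∀ i : Fin t, ∃ jT : Fin (t + m), (jT : ℕ) = (i : ℕ) ∧ CC jT = C i := by
    intro i
    refine ⟨⟨(i : ℕ), by have := i.2; omega⟩, rfl, ?_⟩
    simp only [hCC]
    rw [dif_pos i.2]
  have hCChigh : ∀ j : Fin m, ∃ jT : Fin (t + m),
      (jT : ℕ) = t + (j : ℕ) ∧ CC jT = (CH j).image q := by
    intro j
    refine ⟨⟨t + (j : ℕ), by have := j.2; omega⟩, rfl, ?_⟩
    simp only [hCC]
    rw [dif_neg (by omega : ¬ (t + (j : ℕ) < t))]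
    refine congrArg _ (congrArg CH (Fin.ext ?_))
    simp
  have hCCcl : ∀ j, G.IsClique ((CC j : Set V)) := by
    intro j
    by_cases h : (j : ℕ) < t
    · simp only [hCC]
      rw [dif_pos h]
      exact hCcl _
    · simp only [hCC]
      rw [dif_neg h]
      intro x hx y hy hxy
      simp only [coe_image, Set.mem_image, mem_coe] at hx hy
      obtain ⟨u, hu, rfl⟩ := hx
      obtain ⟨v, hv, rfl⟩ := hy
      have huv : u ≠ v := fun hc => hxy (by rw [hc])
      exact (hCHcl _) (Finset.mem_coe.mpr hu) (Finset.mem_coe.mpr hv) huv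
  -- membership of S for vertices outside V'
  have hmemS : ∀ a : V, a ∉ V' → a ∈ S := by
    intro a ha
    simp only [hS, Finset.mem_compl]
    exact ha
  -- covering of edges with both ends outside V'
  have hcovS : ∀ a b : V, G.Adj a b → (ha : a ∈ S) → (hb : b ∈ S) →
      ∃ jH : Fin m, (∀ x ∈ s(eq ⟨a, ha⟩, eq ⟨b, hb⟩), x ∈ CH jH) := by
    intro a b hadj ha hb
    have hH1 : H.Adj (eq ⟨a, ha⟩) (eq ⟨b, hb⟩) := by
      rw [hHadj, hqinv a ha, hqinv b hb]
      exact hadj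
    have hHe : s(eq ⟨a, ha⟩, eq ⟨b, hb⟩) ∈ H.edgeSet := (SimpleGraph.mem_edgeSet H).mpr hH1
    exact hCHcov.2.1 _ hHe ⟨eq ⟨a, ha⟩, by simp, Finset.mem_univ _⟩
  -- transfer of CH-membership through images
  have himg : ∀ (a b : V) (ha : a ∈ S) (hb : b ∈ S) (jH : Fin m),
      (∀ x ∈ s(eq ⟨a, ha⟩, eq ⟨b, hb⟩), x ∈ CH jH) →
      ∀ x ∈ s(a, b), x ∈ (CH jH).image q := by
    intro a b ha hb jH hall x hx
    rcases Sym2.mem_iff.mp hx with rfl | rfl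
    · exact Finset.mem_image.mpr ⟨eq ⟨x, ha⟩, hall _ (by simp), hqinv x ha⟩
    · exact Finset.mem_image.mpr ⟨eq ⟨x, hb⟩, hall _ (by simp), hqinv x hb⟩
  -- condition 1
  have hcond1 : t + m ≤ (Finset.univ : Finset V).card := by
    have h1 := hIC.1
    have h3 : S.card = Fintype.card V - V'.card := Finset.card_compl V'
    have h2 : V'.card ≤ Fintype.card V := Finset.card_le_univ V'
    have h4 : (Finset.univ : Finset V).card = Fintype.card V := Finset.card_univ
    omega
  -- condition 2
  have hcond2 : ∀ e' ∈ G.edgeSet, (∃ x ∈ e', x ∈ (Finset.univ : Finset V)) →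
      ∃ i : Fin (t + m), ∀ x ∈ e', x ∈ CC i := by
    intro e'
    induction e' using Sym2.ind with
    | _ a b =>
      intro he' _
      have hadj := (SimpleGraph.mem_edgeSet G).mp he'
      by_cases hv : a ∈ V' ∨ b ∈ V'
      · obtain ⟨i, hi⟩ := hIC.2.1 (s(a, b)) he'
          (by rcases hv with h | h
              · exact ⟨a, by simp, h⟩
              · exact ⟨b, by simp, h⟩)
        obtain ⟨jT, -, hjTC⟩ := hCClow i
        refine ⟨jT, ?_⟩
        rw [hjTC]
        exact hi
      · push_neg at hv
        have ha := hmemS a hv.1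
        have hb := hmemS b hv.2
        obtain ⟨jH, hjH⟩ := hcovS a b hadj ha hb
        obtain ⟨jT, -, hjTC⟩ := hCChigh jH
        refine ⟨jT, ?_⟩
        rw [hjTC]
        exact himg a b ha hb jH hjH
  -- star of a V'-vertex is covered by the first t cliques
  have hstarV' : ∀ w ∈ V', ∀ e' ∈ G.edgeSet, w ∈ e' →
      ∃ j : Fin (t + m), (j : ℕ) < t ∧ ∀ x ∈ e', x ∈ CC j := by
    intro w hw e' he' hwe
    obtain ⟨j, hjall⟩ := hIC.2.1 e' he' ⟨w, hwe, hw⟩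
    obtain ⟨jT, hjTv, hjTC⟩ := hCClow j
    refine ⟨jT, by rw [hjTv]; exact j.2, ?_⟩
    rw [hjTC]
    exact hjall
  -- condition 3
  have hcond3 : ∀ i : ℕ, 1 ≤ i → i ≤ (t + m) - 1 →
      ∃ W : Finset V, W ⊆ Finset.univ ∧ i ≤ W.card ∧
        ∀ w ∈ W, ∀ e' ∈ G.edgeSet, w ∈ e' →
          ∃ j : Fin (t + m), (j : ℕ) < i + 1 ∧ ∀ x ∈ e', x ∈ CC j := by
    intro i hi1 hi2
    by_cases hcase : i < t
    · obtain ⟨W, hWsub, hWcard, hWstar⟩ := hIC.2.2 i hi1 (by omega)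
      refine ⟨W, W.subset_univ, hWcard, ?_⟩
      intro w hw e' he' hwe
      obtain ⟨j, hjlt, hjall⟩ := hWstar w hw e' he' hwe
      obtain ⟨jT, hjTv, hjTC⟩ := hCClow j
      refine ⟨jT, by omega, ?_⟩
      rw [hjTC]
      exact hjall
    · push_neg at hcase
      by_cases hieq : i ≤ t
      · -- i = t
        refine ⟨V', V'.subset_univ, by have := hIC.1; omega, ?_⟩
        intro w hw e' he' hwe
        obtain ⟨j, hjlt, hjall⟩ := hstarV' w hw e' he' hwe
        exact ⟨j, by omega, hjall⟩
      · push_neg at hieq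
        obtain ⟨WH, hWHsub, hWHcard, hWHstar⟩ := hCHcov.2.2 (i - t) (by omega) (by omega)
        refine ⟨V' ∪ WH.image q, Finset.subset_univ _, ?_, ?_⟩
        · have hdisj : Disjoint V' (WH.image q) := by
            rw [Finset.disjoint_right]
            intro x hx
            obtain ⟨u, hu, rfl⟩ := Finset.mem_image.mp hx
            have := hqS u
            simp only [hS, Finset.mem_compl] at this
            exact this
          rw [Finset.card_union_of_disjoint hdisj,
            Finset.card_image_of_injective _ hqinj]
          have h1 := hIC.1
          omega
        · intro w hw e'
          induction e' using Sym2.ind with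
          | _ a b =>
            intro he' hwe
            have hadj := (SimpleGraph.mem_edgeSet G).mp he'
            by_cases hv : a ∈ V' ∨ b ∈ V'
            · obtain ⟨x0, hx0e, hx0⟩ :
                  ∃ x ∈ s(a, b), x ∈ V' := by
                rcases hv with h | h
                · exact ⟨a, by simp, h⟩
                · exact ⟨b, by simp, h⟩
              obtain ⟨j, hjall⟩ := hIC.2.1 (s(a, b)) he' ⟨x0, hx0e, hx0⟩
              obtain ⟨jT, hjTv, hjTC⟩ := hCClow j
              refine ⟨jT, by have := j.2; omega, ?_⟩
              rw [hjTC]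
              exact hjall
            · push_neg at hv
              have ha := hmemS a hv.1
              have hb := hmemS b hv.2
              -- w is in the image part
              have hwim : w ∈ WH.image q := by
                rcases Finset.mem_union.mp hw with h | h
                · exfalso
                  rcases Sym2.mem_iff.mp hwe with rfl | rfl
                  · exact hv.1 h
                  · exact hv.2 h
                · exact h
              obtain ⟨u, hu, rfl⟩ := Finset.mem_image.mp hwim
              -- identify u with the subtype element
              have hue : u ∈ s(eq ⟨a, ha⟩, eq ⟨b, hb⟩) := by
                rcases Sym2.mem_iff.mp hwe with hqa | hqb
                · have : u = eq ⟨a, ha⟩ := by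
                    apply hqinj
                    rw [hqinv a ha, hqa]
                  rw [this]
                  simp
                · have : u = eq ⟨b, hb⟩ := by
                    apply hqinj
                    rw [hqinv b hb, hqb]
                  rw [this]
                  simp
              have hHe : s(eq ⟨a, ha⟩, eq ⟨b, hb⟩) ∈ H.edgeSet := by
                refine (SimpleGraph.mem_edgeSet H).mpr ?_
                rw [hHadj, hqinv a ha, hqinv b hb]
                exact hadj
              obtain ⟨jH, hjHlt, hjHall⟩ := hWHstar u hu _ hHe hue
              obtain ⟨jT, hjTv, hjTC⟩ := hCChigh jH
              refine ⟨jT, by omega, ?_⟩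
              rw [hjTC]
              exact himg a b ha hb jH hjHall
  obtain ⟨DD, hdd, heqq⟩ := realization_of_covering G CC hCCcl ⟨hcond1, hcond2, hcond3⟩
  have hle : competitionNumber G ≤ 2 := Nat.sInf_le ⟨DD, hdd, heqq⟩
  omega

end CompKim
end

section
/- If a finite graph G admits a fuzzy reconstruction, then G is a quasi-line graph, i.e., the neighborhood of every vertex of G can be covered by at most two cliques. -/
namespace CompKim

open SimpleGraph


variable {V : Type*}

/-- `T` is (the subgraph of) a path in `H` with distinct endpoints `a` and `b`. -/
def IsPathBetween {W : Type*} (H : SimpleGraph W) (T : H.Subgraph) (a b : W) : Prop :=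
  a ≠ b ∧ ∃ p : H.Walk a b, p.IsPath ∧ T = p.toSubgraph

/-- A fuzzy reconstruction of `G`: a graph `H`, a map `φ : V(G) → V(H)`, and a set of
connected subtrees of `H` satisfying Properties 1–4 of Theorem 1. -/
structure FuzzyReconstruction {V W : Type*} (G : SimpleGraph V) (H : SimpleGraph W)
    (φ : V → W) (trees : Set H.Subgraph) : Prop where
  isTree : ∀ T ∈ trees, (SimpleGraph.Subgraph.coe T).IsTree
  adj_mem : ∀ v v' : V, G.Adj v v' → ∃ T ∈ trees, φ v ∈ T.verts ∧ φ v' ∈ T.verts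
  nonadj_path : ∀ v v' : V, v ≠ v' → ¬ G.Adj v v' → ∀ T ∈ trees,
    φ v ∈ T.verts → φ v' ∈ T.verts → IsPathBetween H T (φ v) (φ v')
  fuzzy_unique : ∀ v₁ v₁' v₂ v₂' : V, v₁ ≠ v₁' → ¬ G.Adj v₁ v₁' → v₂ ≠ v₂' →
    ¬ G.Adj v₂ v₂' → φ v₁ = φ v₂ → ∀ T₁ ∈ trees, ∀ T₂ ∈ trees,
    φ v₁ ∈ T₁.verts → φ v₁' ∈ T₁.verts → φ v₂ ∈ T₂.verts → φ v₂' ∈ T₂.verts → T₁ = T₂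
  deg_three_unique : ∀ w : W, 3 ≤ (H.neighborSet w).ncard →
    ∀ T₁ ∈ trees, ∀ T₂ ∈ trees, w ∈ T₁.verts → w ∈ T₂.verts → T₁ = T₂

/-- Auxiliary: there is a tree in `trees` containing a path from `w` to `z` whose
second vertex is `c`. -/
def DirW {W : Type*} (H : SimpleGraph W) (trees : Set H.Subgraph) (w z c : W) : Prop :=
  ∃ T ∈ trees, ∃ P : H.Walk w z, P.IsPath ∧ P.toSubgraph ≤ T ∧ P.getVert 1 = c

section Aux


variable {W : Type*} {H : SimpleGraph W}

lemma map_hom_toSubgraph_le (T : H.Subgraph) {a b : T.verts} (c : T.coe.Walk a b) :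
    (c.map T.hom).toSubgraph ≤ T := by
  induction c with
  | nil =>
      simp only [Walk.map_nil, Walk.toSubgraph, SimpleGraph.singletonSubgraph_le_iff,
        Subgraph.coe_hom]
      exact Subtype.coe_prop _
  | @cons s u v h p ih =>
      rw [Walk.map_cons]
      exact sup_le (SimpleGraph.subgraphOfAdj_le_of_adj T (by exact h)) ih

lemma exists_coe_walk (T : H.Subgraph) :
    ∀ {a b : W} (p : H.Walk a b), p.toSubgraph ≤ T → ∀ (ha : a ∈ T.verts) (hb : b ∈ T.verts),
      ∃ q : T.coe.Walk ⟨a, ha⟩ ⟨b, hb⟩, q.map T.hom = p := by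
  intro a b p
  induction p with
  | nil => exact fun _ ha hb => ⟨Walk.nil, by simp⟩
  | @cons a c b h p ih =>
      intro hle ha hb
      have hT : T.Adj a c := hle.2 (by simp)
      have hc : c ∈ T.verts := hT.snd_mem
      obtain ⟨q, hq⟩ := ih (le_trans le_sup_right hle) hc hb
      exact ⟨Walk.cons (by exact hT) q, by subst hq; rfl⟩

lemma path_eq_of_le {T : H.Subgraph} (ht : T.coe.IsTree) {a b : W} {p q : H.Walk a b}
    (hp : p.IsPath) (hq : q.IsPath) (hpT : p.toSubgraph ≤ T) (hqT : q.toSubgraph ≤ T) :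
    p = q := by
  have ha : a ∈ T.verts := hpT.1 p.start_mem_verts_toSubgraph
  have hb : b ∈ T.verts := hpT.1 p.end_mem_verts_toSubgraph
  obtain ⟨p', hp'⟩ := exists_coe_walk T p hpT ha hb
  obtain ⟨q', hq'⟩ := exists_coe_walk T q hqT ha hb
  have hp'' : p'.IsPath := Walk.IsPath.of_map (f := T.hom) (by rwa [hp'])
  have hq'' : q'.IsPath := Walk.IsPath.of_map (f := T.hom) (by rwa [hq'])
  have h2 : p' = q' := by
    have := ht.IsAcyclic.path_unique ⟨p', hp''⟩ ⟨q', hq''⟩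
    exact Subtype.ext_iff.mp this
  rw [← hp', ← hq', h2]

lemma exists_path_le {T : H.Subgraph} (hc : T.coe.Connected) {a b : W}
    (ha : a ∈ T.verts) (hb : b ∈ T.verts) :
    ∃ P : H.Walk a b, P.IsPath ∧ P.toSubgraph ≤ T := by
  classical
  obtain ⟨c⟩ := hc.preconnected ⟨a, ha⟩ ⟨b, hb⟩
  exact ⟨(c.toPath.val).map T.hom,
    Walk.map_isPath_of_injective Subgraph.hom_injective c.toPath.prop,
    map_hom_toSubgraph_le T _⟩

lemma eq_getVert_one {a b c : W} {p : H.Walk a b} (hp : p.IsPath)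
    (h : p.toSubgraph.Adj a c) : c = p.getVert 1 := by
  cases p with
  | nil => simp at h
  | @cons a d b h' p₁ =>
      rw [Walk.getVert_cons_succ (n := 0), Walk.getVert_zero]
      simp only [Walk.toSubgraph, Subgraph.sup_adj, subgraphOfAdj_adj] at h
      rcases h with h | h
      · exact (Sym2.congr_right.mp h).symm
      · exact absurd ((Walk.mem_verts_toSubgraph _).1 h.fst_mem)
          ((Walk.cons_isPath_iff _ _).1 hp).2

lemma toSubgraph_adj_getVert_one {a b : W} (p : H.Walk a b) (hne : a ≠ b) :
    p.toSubgraph.Adj a (p.getVert 1) := by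
  cases p with
  | nil => exact absurd rfl hne
  | @cons a d b h' p₁ =>
      rw [Walk.getVert_cons_succ (n := 0), Walk.getVert_zero]
      exact Or.inl (by simp)


variable [Fintype W]

lemma diverge {T T' : H.Subgraph}
    (hdeg3 : ∀ m : W, 3 ≤ (H.neighborSet m).ncard → m ∈ T.verts → m ∈ T'.verts → T = T') :
    ∀ {a b b' r : W} (p : H.Walk a b) (q : H.Walk a b'), p.IsPath → q.IsPath →
      p.toSubgraph ≤ T → q.toSubgraph ≤ T' → H.Adj r a → r ∉ p.support → r ∉ q.support →
      b' ∈ p.support ∨ b ∈ q.support ∨ T = T' := by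
  intro a b b' r p
  induction p generalizing b' r with
  | nil =>
      intro q _ _ _ _ _ _ _
      exact Or.inr (Or.inl q.start_mem_support)
  | @cons a c b h p₁ ih =>
      intro q hp hq hpT hqT hra hrp hrq
      cases q with
      | nil => exact Or.inl (Walk.start_mem_support _)
      | @cons a d b' h' q₁ =>
          by_cases hcd : c = d
          · subst hcd
            have hres := ih (r := a) q₁ ((Walk.cons_isPath_iff _ _).1 hp).1
              ((Walk.cons_isPath_iff _ _).1 hq).1
              (le_trans le_sup_right hpT) (le_trans le_sup_right hqT) h
              ((Walk.cons_isPath_iff _ _).1 hp).2 ((Walk.cons_isPath_iff _ _).1 hq).2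
            rcases hres with h1 | h1 | h1
            · exact Or.inl (by rw [Walk.support_cons]; exact List.mem_cons_of_mem _ h1)
            · exact Or.inr (Or.inl (by rw [Walk.support_cons]; exact List.mem_cons_of_mem _ h1))
            · exact Or.inr (Or.inr h1)
          · refine Or.inr (Or.inr (hdeg3 a ?_ (hpT.1 (Walk.start_mem_verts_toSubgraph _))
              (hqT.1 (Walk.start_mem_verts_toSubgraph _))))
            have hrc : r ≠ c := fun hh => hrp (by
              rw [Walk.support_cons]
              exact List.mem_cons_of_mem _ (by rw [hh]; exact p₁.start_mem_support))
            have hrd : r ≠ d := fun hh => hrq (by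
              rw [Walk.support_cons]
              exact List.mem_cons_of_mem _ (by rw [hh]; exact q₁.start_mem_support))
            have hsub : ({r, c, d} : Set W) ⊆ H.neighborSet a :=
              Set.insert_subset_iff.mpr ⟨hra.symm,
                Set.insert_subset_iff.mpr ⟨h, Set.singleton_subset_iff.mpr h'⟩⟩
            have h3 : ({r, c, d} : Set W).ncard = 3 :=
              Set.ncard_eq_three.mpr ⟨r, c, d, hrc, hrd, hcd, rfl⟩
            calc (3 : ℕ) = ({r, c, d} : Set W).ncard := h3.symm
              _ ≤ (H.neighborSet a).ncard := Set.ncard_le_ncard hsub (Set.toFinite _)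


variable {G : SimpleGraph V} {φ : V → W} {trees : Set H.Subgraph}

lemma lemX (hrec : FuzzyReconstruction G H φ trees)
    {u u' : V} {w x : W} (hne : u ≠ u') (hnadj : ¬ G.Adj u u')
    (hu : φ u ≠ w) (hu' : φ u' ≠ w)
    (h1 : DirW H trees w (φ u) x) (h2 : DirW H trees w (φ u') x) : False := by
  classical
  obtain ⟨T, hT, P, hPp, hPT, hPx⟩ := h1
  obtain ⟨T', hT', Q, hQp, hQT, hQx⟩ := h2
  cases P with
  | nil => exact hu rfl
  | @cons w c zu hadj P₁ =>
    cases Q with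
    | nil => exact hu' rfl
    | @cons w d zu' hadj' Q₁ =>
      rw [Walk.getVert_cons_succ (n := 0), Walk.getVert_zero] at hPx hQx
      subst hPx
      subst hQx
      have hP₁ : P₁.IsPath := ((Walk.cons_isPath_iff _ _).1 hPp).1
      have hQ₁ : Q₁.IsPath := ((Walk.cons_isPath_iff _ _).1 hQp).1
      have hwP₁ : w ∉ P₁.support := ((Walk.cons_isPath_iff _ _).1 hPp).2
      have hwQ₁ : w ∉ Q₁.support := ((Walk.cons_isPath_iff _ _).1 hQp).2
      have hdeg3 : ∀ m : W, 3 ≤ (H.neighborSet m).ncard → m ∈ T.verts → m ∈ T'.verts →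
          T = T' := fun m h3 hm hm' => hrec.deg_three_unique m h3 T hT T' hT' hm hm'
      have hD := diverge hdeg3 P₁ Q₁ hP₁ hQ₁ (le_trans le_sup_right hPT)
        (le_trans le_sup_right hQT) hadj hwP₁ hwQ₁
      rcases hD with hD | hD | hD
      · -- φ u' lies on P, so T is the pair path; contradiction with nodup
        have hu'T : φ u' ∈ T.verts := hPT.1 (by
          rw [Walk.mem_verts_toSubgraph, Walk.support_cons]
          exact List.mem_cons_of_mem _ hD)
        have huT : φ u ∈ T.verts := hPT.1 (Walk.end_mem_verts_toSubgraph _)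
        obtain ⟨hne0, σ, hσp, hTeq⟩ := hrec.nonadj_path u u' hne hnadj T hT huT hu'T
        have hwσ : w ∈ σ.support := by
          rw [← Walk.mem_verts_toSubgraph, ← hTeq]
          exact hPT.1 (Walk.start_mem_verts_toSubgraph _)
        have hsupT : (σ.takeUntil w hwσ).toSubgraph ⊔ (σ.dropUntil w hwσ).toSubgraph = T := by
          rw [hTeq, ← Walk.toSubgraph_append, Walk.take_spec]
        have hPeq : Walk.cons hadj P₁ = (σ.takeUntil w hwσ).reverse :=
          path_eq_of_le (hrec.isTree T hT) hPp ((hσp.takeUntil hwσ).reverse) hPT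
            (by rw [Walk.toSubgraph_reverse]; exact le_trans le_sup_left (le_of_eq hsupT))
        have hu'σ₁ : φ u' ∈ (σ.takeUntil w hwσ).support := by
          have hmem : φ u' ∈ (Walk.cons hadj P₁).support := by
            rw [Walk.support_cons]; exact List.mem_cons_of_mem _ hD
          rw [hPeq, Walk.support_reverse, List.mem_reverse] at hmem
          exact hmem
        have hu'σ₂ : φ u' ∈ (σ.dropUntil w hwσ).support.tail := by
          have h0 : φ u' ∈ (σ.dropUntil w hwσ).support := Walk.end_mem_support _
          rw [Walk.support_eq_cons] at h0
          rcases List.mem_cons.mp h0 with h0 | h0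
          · exact absurd h0 hu'
          · exact h0
        have hnd := hσp.support_nodup
        rw [← Walk.take_spec σ hwσ, Walk.support_append, List.nodup_append] at hnd
        exact hnd.2.2 _ hu'σ₁ _ hu'σ₂ rfl
      · -- φ u lies on Q, so T' is the pair path
        have huT' : φ u ∈ T'.verts := hQT.1 (by
          rw [Walk.mem_verts_toSubgraph, Walk.support_cons]
          exact List.mem_cons_of_mem _ hD)
        have hu'T' : φ u' ∈ T'.verts := hQT.1 (Walk.end_mem_verts_toSubgraph _)
        obtain ⟨hne0, σ, hσp, hTeq⟩ := hrec.nonadj_path u u' hne hnadj T' hT' huT' hu'T'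
        have hwσ : w ∈ σ.support := by
          rw [← Walk.mem_verts_toSubgraph, ← hTeq]
          exact hQT.1 (Walk.start_mem_verts_toSubgraph _)
        have hsupT : (σ.takeUntil w hwσ).toSubgraph ⊔ (σ.dropUntil w hwσ).toSubgraph = T' := by
          rw [hTeq, ← Walk.toSubgraph_append, Walk.take_spec]
        have hQeq : Walk.cons hadj' Q₁ = σ.dropUntil w hwσ :=
          path_eq_of_le (hrec.isTree T' hT') hQp (hσp.dropUntil hwσ) hQT
            (le_trans le_sup_right (le_of_eq hsupT))
        have huσ₂ : φ u ∈ (σ.dropUntil w hwσ).support.tail := by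
          have h0 : φ u ∈ (σ.dropUntil w hwσ).support := by
            rw [← hQeq, Walk.support_cons]
            exact List.mem_cons_of_mem _ hD
          rw [Walk.support_eq_cons] at h0
          rcases List.mem_cons.mp h0 with h0 | h0
          · exact absurd h0 hu
          · exact h0
        have huσ₁ : φ u ∈ (σ.takeUntil w hwσ).support := Walk.start_mem_support _
        have hnd := hσp.support_nodup
        rw [← Walk.take_spec σ hwσ, Walk.support_append, List.nodup_append] at hnd
        exact hnd.2.2 _ huσ₁ _ huσ₂ rfl
      · -- T = T' : both first steps inside one path through w
        subst hD
        have huT : φ u ∈ T.verts := hPT.1 (Walk.end_mem_verts_toSubgraph _)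
        have hu'T : φ u' ∈ T.verts := hQT.1 (Walk.end_mem_verts_toSubgraph _)
        obtain ⟨hne0, σ, hσp, hTeq⟩ := hrec.nonadj_path u u' hne hnadj T hT huT hu'T
        have hwσ : w ∈ σ.support := by
          rw [← Walk.mem_verts_toSubgraph, ← hTeq]
          exact hPT.1 (Walk.start_mem_verts_toSubgraph _)
        have hsupT : (σ.takeUntil w hwσ).toSubgraph ⊔ (σ.dropUntil w hwσ).toSubgraph = T := by
          rw [hTeq, ← Walk.toSubgraph_append, Walk.take_spec]
        have hPeq : Walk.cons hadj P₁ = (σ.takeUntil w hwσ).reverse :=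
          path_eq_of_le (hrec.isTree T hT) hPp ((hσp.takeUntil hwσ).reverse) hPT
            (by rw [Walk.toSubgraph_reverse]; exact le_trans le_sup_left (le_of_eq hsupT))
        have hQeq : Walk.cons hadj' Q₁ = σ.dropUntil w hwσ :=
          path_eq_of_le (hrec.isTree T hT) hQp (hσp.dropUntil hwσ) hQT
            (le_trans le_sup_right (le_of_eq hsupT))
        have hd₁ : d ∈ (σ.takeUntil w hwσ).support := by
          have hmem : d ∈ (Walk.cons hadj P₁).support := by
            rw [Walk.support_cons]; exact List.mem_cons_of_mem _ P₁.start_mem_support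
          rw [hPeq, Walk.support_reverse, List.mem_reverse] at hmem
          exact hmem
        have hd₂ : d ∈ (σ.dropUntil w hwσ).support.tail := by
          have h0 : d ∈ (σ.dropUntil w hwσ).support := by
            rw [← hQeq, Walk.support_cons]
            exact List.mem_cons_of_mem _ Q₁.start_mem_support
          rw [Walk.support_eq_cons] at h0
          rcases List.mem_cons.mp h0 with h0 | h0
          · exact absurd h0 (Ne.symm hadj.ne)
          · exact h0
        have hnd := hσp.support_nodup
        rw [← Walk.take_spec σ hwσ, Walk.support_append, List.nodup_append] at hnd
        exact hnd.2.2 _ hd₁ _ hd₂ rfl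

lemma lemZX (hrec : FuzzyReconstruction G H φ trees)
    {z u u'' : V} {w x y : W} (hzw : φ z = w)
    (hzu : z ≠ u) (hnzu : ¬ G.Adj z u) (hzu'' : z ≠ u'') (hnzu'' : ¬ G.Adj z u'')
    (h1 : DirW H trees w (φ u) x) (h2 : DirW H trees w (φ u'') y) : x = y := by
  subst hzw
  obtain ⟨T, hT, P, hPp, hPT, hPx⟩ := h1
  obtain ⟨T'', hT'', Q, hQp, hQT, hQy⟩ := h2
  have hzT : φ z ∈ T.verts := hPT.1 (Walk.start_mem_verts_toSubgraph _)
  have huT : φ u ∈ T.verts := hPT.1 (Walk.end_mem_verts_toSubgraph _)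
  have hzT'' : φ z ∈ T''.verts := hQT.1 (Walk.start_mem_verts_toSubgraph _)
  have hu''T : φ u'' ∈ T''.verts := hQT.1 (Walk.end_mem_verts_toSubgraph _)
  obtain ⟨hne1, σ, hσp, hTeq⟩ := hrec.nonadj_path z u hzu hnzu T hT hzT huT
  obtain ⟨hne2, τ, hτp, hTeq''⟩ := hrec.nonadj_path z u'' hzu'' hnzu'' T'' hT'' hzT'' hu''T
  have hTT : T = T'' := hrec.fuzzy_unique z u z u'' hzu hnzu hzu'' hnzu'' rfl T hT T'' hT''
    hzT huT hzT'' hu''T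
  have hPσ : P = σ := path_eq_of_le (hrec.isTree T hT) hPp hσp hPT (le_of_eq hTeq.symm)
  have hQτ : Q = τ := path_eq_of_le (hrec.isTree T'' hT'') hQp hτp hQT (le_of_eq hTeq''.symm)
  have hadjy : σ.toSubgraph.Adj (φ z) (τ.getVert 1) := by
    rw [← hTeq, hTT, hTeq'']
    exact toSubgraph_adj_getVert_one τ hne2
  have h3 : τ.getVert 1 = σ.getVert 1 := eq_getVert_one hσp hadjy
  rw [← hPx, ← hQy, hPσ, hQτ, h3]

end Aux

/-- If a finite graph admits a fuzzy reconstruction then it is a quasi-line graph. -/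
theorem quasiLine_of_fuzzyReconstruction [Fintype V] (G : SimpleGraph V)
    {W : Type*} [Fintype W] (H : SimpleGraph W) (φ : V → W) (trees : Set H.Subgraph)
    (hrec : FuzzyReconstruction G H φ trees) : QuasiLine G := by
  classical
  intro v
  by_cases hall : ∀ u ∈ G.neighborSet v, ∀ u' ∈ G.neighborSet v, u ≠ u' → G.Adj u u'
  · exact ⟨G.neighborSet v, ∅, fun a ha b hb hne => hall a ha b hb hne,
      by simp [SimpleGraph.IsClique], by simp⟩
  push_neg at hall
  obtain ⟨a₁, ha₁, a₂, ha₂, hne12, hnadj12⟩ := hall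
  rw [SimpleGraph.mem_neighborSet] at ha₁ ha₂
  -- two vertices with the same image φ v and nonadjacent: impossible
  have hZZ : ∀ a b : V, G.Adj v a → a ≠ b → ¬ G.Adj a b → φ a = φ v → φ b = φ v → False := by
    intro a b hva hab hnab ha hb
    obtain ⟨T, hT, hvT, haT⟩ := hrec.adj_mem v a hva
    have hbT : φ b ∈ T.verts := by rw [hb]; exact hvT
    exact (hrec.nonadj_path a b hab hnab T hT haT hbT).1 (by rw [ha, hb])
  -- normalize the nonadjacent pair so that the first has image ≠ φ v
  obtain ⟨u₁, hu₁, u₂, hu₂, hne12, hnadj12, hu₁w⟩ :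
      ∃ a, G.Adj v a ∧ ∃ b, G.Adj v b ∧ a ≠ b ∧ ¬G.Adj a b ∧ φ a ≠ φ v := by
    by_cases h : φ a₁ = φ v
    · refine ⟨a₂, ha₂, a₁, ha₁, hne12.symm, fun hh => hnadj12 hh.symm, fun h2 => ?_⟩
      exact hZZ a₁ a₂ ha₁ hne12 hnadj12 h h2
    · exact ⟨a₁, ha₁, a₂, ha₂, hne12, hnadj12, h⟩
  -- coverage: two directions x, y suffice
  have hcov : ∃ x y : W, ∀ u, G.Adj v u → φ u ≠ φ v →
      ∃ c, DirW H trees (φ v) (φ u) c ∧ (c = x ∨ c = y) := by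
    by_cases hdeg : 3 ≤ (H.neighborSet (φ v)).ncard
    · obtain ⟨T₀, hT₀, hvT₀, hu₁T₀⟩ := hrec.adj_mem v u₁ hu₁
      have hu₂T₀ : φ u₂ ∈ T₀.verts := by
        obtain ⟨T₂, hT₂, hvT₂, hu₂T₂⟩ := hrec.adj_mem v u₂ hu₂
        rw [hrec.deg_three_unique (φ v) hdeg T₀ hT₀ T₂ hT₂ hvT₀ hvT₂]; exact hu₂T₂
      obtain ⟨hne0, σ, hσp, hTeq⟩ := hrec.nonadj_path u₁ u₂ hne12 hnadj12 T₀ hT₀ hu₁T₀ hu₂T₀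
      have hwσ : φ v ∈ σ.support := by
        rw [← Walk.mem_verts_toSubgraph, ← hTeq]; exact hvT₀
      refine ⟨(σ.takeUntil (φ v) hwσ).reverse.getVert 1, (σ.dropUntil (φ v) hwσ).getVert 1, ?_⟩
      intro u hvu huw
      obtain ⟨T, hT, hvT, huT⟩ := hrec.adj_mem v u hvu
      obtain ⟨P, hPp, hPT⟩ := exists_path_le (hrec.isTree T hT).isConnected hvT huT
      refine ⟨P.getVert 1, ⟨T, hT, P, hPp, hPT, rfl⟩, ?_⟩
      have hTT₀ : T = T₀ := hrec.deg_three_unique (φ v) hdeg T hT T₀ hT₀ hvT hvT₀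
      have hadj : T₀.Adj (φ v) (P.getVert 1) := by
        rw [← hTT₀]; exact hPT.2 (toSubgraph_adj_getVert_one P (Ne.symm huw))
      rw [hTeq, ← Walk.take_spec σ hwσ, Walk.toSubgraph_append, Subgraph.sup_adj] at hadj
      rcases hadj with h | h
      · left
        rw [← Walk.toSubgraph_reverse] at h
        exact (eq_getVert_one ((hσp.takeUntil hwσ).reverse) h)
      · right
        exact (eq_getVert_one (hσp.dropUntil hwσ) h)
    · push_neg at hdeg
      have h2 : (H.neighborSet (φ v)).ncard ≤ 2 := Nat.lt_succ_iff.mp hdeg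
      obtain ⟨x, y, hxy⟩ : ∃ x y : W, H.neighborSet (φ v) ⊆ {x, y} := by
        rcases Set.eq_empty_or_nonempty (H.neighborSet (φ v)) with h | ⟨a, ha⟩
        · exact ⟨φ v, φ v, by rw [h]; exact Set.empty_subset _⟩
        rcases Set.eq_empty_or_nonempty (H.neighborSet (φ v) \ {a}) with h' | ⟨b, hb⟩
        · refine ⟨a, a, fun c hc => ?_⟩
          have : c ∈ H.neighborSet (φ v) \ {a} ∨ c = a := by
            by_cases hca : c = a
            · exact Or.inr hca
            · exact Or.inl ⟨hc, hca⟩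
          rcases this with hcc | rfl
          · rw [h'] at hcc; exact absurd hcc (Set.notMem_empty _)
          · exact Set.mem_insert _ _
        refine ⟨a, b, fun c hc => ?_⟩
        by_contra hcc
        simp only [Set.mem_insert_iff, Set.mem_singleton_iff, not_or] at hcc
        have hab : a ≠ b := fun hh => hb.2 (by rw [← hh]; rfl)
        have h3 : ({a, b, c} : Set W).ncard = 3 :=
          Set.ncard_eq_three.mpr ⟨a, b, c, hab, Ne.symm hcc.1, Ne.symm hcc.2, rfl⟩
        have hsub : ({a, b, c} : Set W) ⊆ H.neighborSet (φ v) :=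
          Set.insert_subset_iff.mpr ⟨ha,
            Set.insert_subset_iff.mpr ⟨hb.1, Set.singleton_subset_iff.mpr hc⟩⟩
        have := Set.ncard_le_ncard hsub (Set.toFinite _)
        omega
      refine ⟨x, y, fun u hvu huw => ?_⟩
      obtain ⟨T, hT, hvT, huT⟩ := hrec.adj_mem v u hvu
      obtain ⟨P, hPp, hPT⟩ := exists_path_le (hrec.isTree T hT).isConnected hvT huT
      refine ⟨P.getVert 1, ⟨T, hT, P, hPp, hPT, rfl⟩, ?_⟩
      have hadj : H.Adj (φ v) (P.getVert 1) :=
        (toSubgraph_adj_getVert_one P (Ne.symm huw)).adj_sub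
      simpa using hxy hadj
  obtain ⟨x, y, hcov⟩ := hcov
  set A : Set V := {a | G.Adj v a ∧ φ a ≠ φ v ∧ DirW H trees (φ v) (φ a) x} with hA
  set ZA : Set V := {z | (G.Adj v z ∧ φ z = φ v) ∧ ∃ a ∈ A, z ≠ a ∧ ¬ G.Adj z a} with hZA
  set B : Set V := {a | G.Adj v a ∧ φ a ≠ φ v ∧ DirW H trees (φ v) (φ a) y ∧
    ¬ DirW H trees (φ v) (φ a) x} with hB
  refine ⟨A ∪ ({z | G.Adj v z ∧ φ z = φ v} \ ZA), B ∪ ZA, ?_, ?_, ?_⟩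
  · -- first clique
    intro a ha b hb hab
    by_contra hnadj
    rcases ha with ha | ha <;> rcases hb with hb | hb
    · exact absurd (lemX hrec hab hnadj ha.2.1 hb.2.1 ha.2.2 hb.2.2) not_false
    · exact hb.2 ⟨hb.1, a, ha, Ne.symm hab, fun hh => hnadj hh.symm⟩
    · exact ha.2 ⟨ha.1, b, hb, hab, hnadj⟩
    · exact hZZ a b ha.1.1 hab hnadj ha.1.2 hb.1.2
  · -- second clique
    intro a ha b hb hab
    by_contra hnadj
    rcases ha with ha | ha <;> rcases hb with hb | hb
    · exact absurd (lemX hrec hab hnadj ha.2.1 hb.2.1 ha.2.2.1 hb.2.2.1) not_false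
    · -- a ∈ B, b ∈ ZA
      obtain ⟨a₀, ha₀, hba₀, hnba₀⟩ := hb.2
      have hxy : x = y := lemZX hrec hb.1.2 hba₀ hnba₀ (Ne.symm hab)
        (fun hh => hnadj hh.symm) ha₀.2.2 ha.2.2.1
      exact ha.2.2.2 (hxy ▸ ha.2.2.1)
    · -- a ∈ ZA, b ∈ B
      obtain ⟨a₀, ha₀, haa₀, hnaa₀⟩ := ha.2
      have hxy : x = y := lemZX hrec ha.1.2 haa₀ hnaa₀ hab hnadj ha₀.2.2 hb.2.2.1
      exact hb.2.2.2 (hxy ▸ hb.2.2.1)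
    · exact hZZ a b ha.1.1 hab hnadj ha.1.2 hb.1.2
  · -- the union covers the neighborhood
    ext u
    simp only [SimpleGraph.mem_neighborSet, Set.mem_union, Set.mem_diff, Set.mem_setOf_eq]
    constructor
    · intro hvu
      by_cases hw : φ u = φ v
      · by_cases hz : u ∈ ZA
        · exact Or.inr (Or.inr hz)
        · exact Or.inl (Or.inr ⟨⟨hvu, hw⟩, hz⟩)
      · obtain ⟨c, hdir, hc⟩ := hcov u hvu hw
        rcases hc with rfl | rfl
        · exact Or.inl (Or.inl ⟨hvu, hw, hdir⟩)
        · by_cases hx : DirW H trees (φ v) (φ u) x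
          · exact Or.inl (Or.inl ⟨hvu, hw, hx⟩)
          · exact Or.inr (Or.inl ⟨hvu, hw, hdir, hx⟩)
    · rintro ((h | h) | (h | h))
      · exact h.1
      · exact h.1.1
      · exact h.1
      · exact h.1.1

end CompKim
end

section
/- Every fuzzy circular interval graph admits a fuzzy reconstruction. -/
namespace CompKim

open SimpleGraph

variable {V : Type*}

/-- The closed arc on the unit circle starting at `a` of length `l`. -/
noncomputable def arc (a : AddCircle (1 : ℝ)) (l : ℝ) : Set (AddCircle (1 : ℝ)) :=
  (fun t : ℝ => a + (t : AddCircle (1 : ℝ))) '' Set.Icc 0 l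

/-- `G` is a fuzzy circular interval graph: there is a map `φ` to a circle and a
collection of non-trivial closed arcs, none including another and no two sharing an
endpoint, such that adjacent vertices map into a common arc, and non-adjacent vertices
lying in a common arc are its two (distinct) endpoints. -/
def IsFuzzyCircularInterval (G : SimpleGraph V) : Prop :=
  ∃ (φ : V → AddCircle (1 : ℝ)) (n : ℕ) (a : Fin n → AddCircle (1 : ℝ)) (l : Fin n → ℝ),
    (∀ i, 0 < l i ∧ l i < 1) ∧
    (∀ i j, i ≠ j → ¬ arc (a i) (l i) ⊆ arc (a j) (l j)) ∧
    (∀ i j, i ≠ j →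
      ({a i, a i + (↑(l i) : AddCircle (1 : ℝ))} ∩
        {a j, a j + (↑(l j) : AddCircle (1 : ℝ))} : Set (AddCircle (1 : ℝ))) = ∅) ∧
    (∀ u v, G.Adj u v → ∃ i, φ u ∈ arc (a i) (l i) ∧ φ v ∈ arc (a i) (l i)) ∧
    (∀ u v, u ≠ v → ¬ G.Adj u v → ∀ i, φ u ∈ arc (a i) (l i) → φ v ∈ arc (a i) (l i) →
      (φ u = a i ∧ φ v = a i + (↑(l i) : AddCircle (1 : ℝ))) ∨
      (φ v = a i ∧ φ u = a i + (↑(l i) : AddCircle (1 : ℝ))))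


/-- The discrete cycle graph on `ZMod k`. -/
def cyc (k : ℕ) : SimpleGraph (ZMod k) where
  Adj x y := x ≠ y ∧ (y = x + 1 ∨ x = y + 1)
  symm := ⟨fun _ _ ⟨h, h2⟩ => ⟨h.symm, h2.symm⟩⟩
  loopless := ⟨fun _ ⟨h, _⟩ => h rfl⟩

lemma cyc_nbhd (k : ℕ) (w : ZMod k) :
    (cyc k).neighborSet w ⊆ {w + 1, w - 1} := by
  intro y hy
  rcases hy with ⟨-, h | h⟩
  · exact Or.inl h
  · exact Or.inr (eq_sub_of_add_eq h.symm)

/-- The walk `x, x+1, …, x+d` in the cycle graph. -/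
def chain {k : ℕ} (h1 : (1 : ZMod k) ≠ 0) (x : ZMod k) :
    (d : ℕ) → (cyc k).Walk x (x + (d : ZMod k))
  | 0 => Walk.nil.copy rfl (by simp)
  | (d + 1) =>
      (Walk.cons (show (cyc k).Adj x (x + 1) from
          ⟨fun h => h1 (left_eq_add.mp h), Or.inl rfl⟩)
        (chain h1 (x + 1) d)).copy rfl (by push_cast; ring)

lemma toSubgraph_copy {W : Type*} {H : SimpleGraph W} {u v u' v' : W}
    (p : H.Walk u v) (hu : u = u') (hv : v = v') :
    (p.copy hu hv).toSubgraph = p.toSubgraph := by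
  subst hu; subst hv; rfl

lemma chain_support {k : ℕ} (h1 : (1 : ZMod k) ≠ 0) (x : ZMod k) (d : ℕ) (y : ZMod k) :
    y ∈ (chain h1 x d).support ↔ ∃ j : ℕ, j ≤ d ∧ y = x + (j : ZMod k) := by
  induction d generalizing x with
  | zero =>
    simp only [chain, Walk.support_copy, Walk.support_nil, List.mem_singleton]
    constructor
    · rintro rfl; exact ⟨0, le_refl 0, by simp⟩
    · rintro ⟨j, hj, rfl⟩; interval_cases j; simp
  | succ d ih =>
    simp only [chain, Walk.support_copy, Walk.support_cons, List.mem_cons, ih]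
    constructor
    · rintro (rfl | ⟨j, hj, rfl⟩)
      · exact ⟨0, by omega, by simp⟩
      · exact ⟨j + 1, by omega, by push_cast; ring⟩
    · rintro ⟨j, hj, rfl⟩
      match j with
      | 0 => left; simp
      | (j + 1) => right; exact ⟨j, by omega, by push_cast; ring⟩

lemma chain_verts {k : ℕ} (h1 : (1 : ZMod k) ≠ 0) (x : ZMod k) (d : ℕ) (y : ZMod k) :
    y ∈ (chain h1 x d).toSubgraph.verts ↔ ∃ j : ℕ, j ≤ d ∧ y = x + (j : ZMod k) := by
  rw [Walk.mem_verts_toSubgraph, chain_support]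

lemma chain_adj {k : ℕ} (h1 : (1 : ZMod k) ≠ 0) (x : ZMod k) (d : ℕ) (u v : ZMod k) :
    (chain h1 x d).toSubgraph.Adj u v →
      ∃ j : ℕ, j < d ∧ ((u = x + (j : ZMod k) ∧ v = x + (j : ZMod k) + 1) ∨
        (v = x + (j : ZMod k) ∧ u = x + (j : ZMod k) + 1)) := by
  induction d generalizing x with
  | zero =>
    intro h
    rw [chain, toSubgraph_copy] at h
    simp only [Walk.toSubgraph] at h
    exact absurd h (by simp)
  | succ d ih =>
    intro h
    rw [chain, toSubgraph_copy] at h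
    simp only [Walk.toSubgraph, Subgraph.sup_adj] at h
    rcases h with h | h
    · simp only [subgraphOfAdj_adj, Sym2.eq, Sym2.rel_iff', Prod.mk.injEq, Prod.swap_prod_mk] at h
      rcases h with ⟨rfl, rfl⟩ | ⟨rfl, rfl⟩
      · exact ⟨0, by omega, Or.inl ⟨by simp, by simp⟩⟩
      · exact ⟨0, by omega, Or.inr ⟨by simp, by simp⟩⟩
    · obtain ⟨j, hj, hc⟩ := ih (x + 1) h
      refine ⟨j + 1, by omega, ?_⟩
      rcases hc with ⟨h1', h2'⟩ | ⟨h1', h2'⟩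
      · exact Or.inl ⟨by rw [h1']; push_cast; ring, by rw [h2']; push_cast; ring⟩
      · exact Or.inr ⟨by rw [h1']; push_cast; ring, by rw [h2']; push_cast; ring⟩

lemma chain_isPath {k : ℕ} (h1 : (1 : ZMod k) ≠ 0) (x : ZMod k) (d : ℕ) (hd : d < k) :
    (chain h1 x d).IsPath := by
  induction d generalizing x with
  | zero => simp [chain]
  | succ d ih =>
    rw [chain]
    simp only [Walk.isPath_copy]
    rw [Walk.cons_isPath_iff]
    refine ⟨ih (x + 1) (by omega), ?_⟩
    intro hx
    rw [chain_support] at hx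
    obtain ⟨j, hj, hxe⟩ := hx
    have h0 : ((j + 1 : ℕ) : ZMod k) = 0 := by
      have : x = x + (1 + (j : ZMod k)) := by rw [← add_assoc]; exact hxe
      have := (left_eq_add.mp this)
      push_cast
      rw [add_comm]
      exact this
    rw [ZMod.natCast_eq_zero_iff] at h0
    have := Nat.le_of_dvd (by omega) h0
    omega


lemma no_cross {W : Type*} {G : SimpleGraph W} (f : W → ℕ) (N : ℕ)
    (hstep : ∀ a b, G.Adj a b → f b = f a + 1 ∨ f a = f b + 1)
    (hnone : ∀ a b, G.Adj a b → f a = N → f b = N + 1 → False) :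
    ∀ {u v : W} (p : G.Walk u v), f u ≤ N → N + 1 ≤ f v → False := by
  intro u v p
  induction p with
  | nil => intro h1 h2; omega
  | @cons u w v h q ih =>
    intro hu hv
    by_cases hw : f w ≤ N
    · exact ih hw hv
    · push_neg at hw
      rcases hstep _ _ h with h' | h'
      · exact hnone _ _ h (by omega) (by omega)
      · omega

lemma acyclic_of_step {W : Type*} {G : SimpleGraph W} (f : W → ℕ)
    (hinj : Function.Injective f)
    (hstep : ∀ a b, G.Adj a b → f b = f a + 1 ∨ f a = f b + 1) : G.IsAcyclic := by
  rw [SimpleGraph.isAcyclic_iff_forall_adj_isBridge]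
  have key : ∀ v w, G.Adj v w → f w = f v + 1 → G.IsBridge s(v, w) := by
    intro v w hvw hfw
    rw [SimpleGraph.isBridge_iff]
    refine fun hreach => ?_
    obtain ⟨p⟩ := hreach
    have hle : ∀ a b : W, (G \ SimpleGraph.fromEdgeSet {s(v, w)}).Adj a b → G.Adj a b := by
      intro a b h; rw [SimpleGraph.sdiff_adj] at h; exact h.1
    refine no_cross (G := G \ SimpleGraph.fromEdgeSet {s(v, w)}) f (f v)
      (fun a b h => hstep a b (hle _ _ h)) ?_ p le_rfl (by omega)
    intro a b hab hfa hfb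
    have ha : a = v := hinj (by omega)
    have hb : b = w := hinj (by omega)
    subst ha; subst hb
    rw [SimpleGraph.sdiff_adj] at hab
    exact hab.2 (by rw [SimpleGraph.fromEdgeSet_adj]; exact ⟨rfl, hvw.ne⟩)
  intro v w hvw
  rcases hstep _ _ hvw with h | h
  · exact key v w hvw h
  · rw [Sym2.eq_swap]; exact key w v hvw.symm h

lemma chain_isTree {k : ℕ} [NeZero k] (h1 : (1 : ZMod k) ≠ 0) (x : ZMod k) (d : ℕ)
    (hd : d < k) : ((chain h1 x d).toSubgraph.coe).IsTree := by
  constructor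
  · exact ((chain h1 x d).toSubgraph_connected).coe
  · refine acyclic_of_step (fun z => ((z.1 : ZMod k) - x).val) ?_ ?_
    · intro z z' h
      apply Subtype.ext
      have := ZMod.val_injective k h
      have : (z : ZMod k) - x + x = (z' : ZMod k) - x + x := by rw [this]
      simpa using this
    · rintro ⟨za, hza⟩ ⟨zb, hzb⟩ hab
      have hab' : (chain h1 x d).toSubgraph.Adj za zb := hab
      obtain ⟨j, hj, hc⟩ := chain_adj h1 x d za zb hab'
      have e1 : (x + (j : ZMod k) - x).val = j := by
        rw [show x + (j : ZMod k) - x = (j : ZMod k) by ring, ZMod.val_cast_of_lt (by omega)]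
      have e2 : (x + (j : ZMod k) + 1 - x).val = j + 1 := by
        rw [show x + (j : ZMod k) + 1 - x = ((j + 1 : ℕ) : ZMod k) by push_cast; ring,
          ZMod.val_cast_of_lt (by omega)]
      rcases hc with ⟨ha, hb⟩ | ⟨ha, hb⟩
      · left; simp only [ha, hb]; rw [e1, e2]
      · right; simp only [ha, hb]; rw [e1, e2]

/-- Every fuzzy circular interval graph admits a fuzzy reconstruction. -/
theorem fuzzyCircularInterval_has_reconstruction [Fintype V] (G : SimpleGraph V)
    (hfci : IsFuzzyCircularInterval G) :
    ∃ (W : Type) (_ : Fintype W) (H : SimpleGraph W) (φ : V → W)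
      (trees : Set H.Subgraph), FuzzyReconstruction G H φ trees := by
  classical
  obtain ⟨φ, n, a, l, hl, -, hdisj, hadj, hnadj⟩ := hfci
  rcases Nat.eq_zero_or_pos n with hn | hn
  · subst hn
    refine ⟨Unit, inferInstance, ⊥, fun _ => (), ∅, ?_⟩
    constructor
    · intro T hT; exact absurd hT (Set.notMem_empty T)
    · intro u v huv; obtain ⟨i, -⟩ := hadj u v huv; exact i.elim0
    · intro _ _ _ _ T hT; exact absurd hT (Set.notMem_empty T)
    · intro _ _ _ _ _ _ _ _ _ T hT _; exact absurd hT (Set.notMem_empty T)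
    · intro _ _ T hT; exact absurd hT (Set.notMem_empty T)
  haveI : Fact ((0:ℝ) < 1) := ⟨one_pos⟩
  set b : Fin n → AddCircle (1:ℝ) := fun i => a i + ((l i : ℝ) : AddCircle (1:ℝ)) with hb
  set g : AddCircle (1:ℝ) → ℝ := fun x => (AddCircle.equivIco 1 0 x : ℝ) with hgdef
  have hg_mem : ∀ x, g x ∈ Set.Ico (0:ℝ) 1 := fun x => by
    simpa using (AddCircle.equivIco 1 0 x).2
  have hg_coe : ∀ x, ((g x : ℝ) : AddCircle (1:ℝ)) = x := fun x =>
    (AddCircle.equivIco 1 0).symm_apply_apply x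
  have hg_inj : Function.Injective g := fun x y h => by rw [← hg_coe x, ← hg_coe y, h]
  have hg_of : ∀ r : ℝ, r ∈ Set.Ico (0:ℝ) 1 → g ((r : ℝ) : AddCircle (1:ℝ)) = r := by
    intro r hr
    have h := hg_coe ((r : ℝ) : AddCircle (1:ℝ))
    rwa [AddCircle.coe_eq_coe_iff_of_mem_Ico (a := (0:ℝ)) (by simpa using hg_mem _)
      (by simpa using hr)] at h
  have harc : ∀ (c : AddCircle (1:ℝ)) (L : ℝ), 0 ≤ L → L < 1 →
      ∀ x, (x ∈ arc c L ↔ g (x - c) ≤ L) := by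
    intro c L hL0 hL1 x
    constructor
    · rintro ⟨t, ht, rfl⟩
      have h2 : g (c + ((t : ℝ) : AddCircle (1:ℝ)) - c) = t := by
        rw [add_sub_cancel_left]
        exact hg_of t ⟨ht.1, lt_of_le_of_lt ht.2 hL1⟩
      rw [h2]; exact ht.2
    · intro h
      refine ⟨g (x - c), ⟨(hg_mem _).1, h⟩, ?_⟩
      show c + ((g (x - c) : ℝ) : AddCircle (1:ℝ)) = x
      rw [hg_coe, add_sub_cancel]
  have hg_sub : ∀ x y : AddCircle (1:ℝ),
      g (x - y) = if g y ≤ g x then g x - g y else g x - g y + 1 := by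
    intro x y
    have hx := hg_mem x; have hy := hg_mem y
    have hxy : x - y = ((g x - g y : ℝ) : AddCircle (1:ℝ)) := by
      rw [AddCircle.coe_sub, hg_coe, hg_coe]
    split_ifs with h
    · rw [hxy]; exact hg_of _ ⟨by linarith, by linarith [hx.2, hy.1]⟩
    · push_neg at h
      have h1 : ((g x - g y : ℝ) : AddCircle (1:ℝ)) = ((g x - g y + 1 : ℝ) : AddCircle (1:ℝ)) := by
        rw [AddCircle.coe_add, AddCircle.coe_period (p := (1:ℝ)), add_zero]
      rw [hxy, h1]
      exact hg_of _ ⟨by linarith [hx.1, hy.2], by linarith⟩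

  -- the finite set of relevant circle points
  have hfin : (Set.range φ ∪ (Set.range a ∪ Set.range b)).Finite :=
    (Set.finite_range φ).union ((Set.finite_range a).union (Set.finite_range b))
  set S : Finset (AddCircle (1:ℝ)) := hfin.toFinset with hS
  have hφS : ∀ v, φ v ∈ S := fun v => by
    rw [hS, Set.Finite.mem_toFinset]; exact Or.inl ⟨v, rfl⟩
  have haS : ∀ i, a i ∈ S := fun i => by
    rw [hS, Set.Finite.mem_toFinset]; exact Or.inr (Or.inl ⟨i, rfl⟩)
  have hbS : ∀ i, b i ∈ S := fun i => by
    rw [hS, Set.Finite.mem_toFinset]; exact Or.inr (Or.inr ⟨i, rfl⟩)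
  set S' : Finset ℝ := S.image g with hS'
  have hmemS' : ∀ x ∈ S, g x ∈ S' := fun x hx => Finset.mem_image_of_mem g hx
  set k := S'.card with hk
  set e : Fin k ≃o {x : ℝ // x ∈ S'} := S'.orderIsoOfFin rfl with he
  set pos : AddCircle (1:ℝ) → ℕ :=
    fun x => if hx : g x ∈ S' then ((e.symm ⟨g x, hx⟩ : Fin k) : ℕ) else 0 with hpos
  have hpos_lt : ∀ x, g x ∈ S' → pos x < k := by
    intro x hx; rw [hpos]; simp only [dif_pos hx]; exact (e.symm ⟨g x, hx⟩).isLt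
  have hpos_mono : ∀ x y, g x ∈ S' → g y ∈ S' → (pos x ≤ pos y ↔ g x ≤ g y) := by
    intro x y hx hy
    rw [hpos]; simp only [dif_pos hx, dif_pos hy]
    rw [← Fin.le_def, e.symm.le_iff_le, Subtype.mk_le_mk]
  have hpos_inj : ∀ x y, g x ∈ S' → g y ∈ S' → pos x = pos y → x = y := by
    intro x y hx hy h
    apply hg_inj
    exact le_antisymm ((hpos_mono x y hx hy).mp h.le) ((hpos_mono y x hy hx).mp h.ge)
  -- basic facts about arcs' endpoints
  have hlb : ∀ i, g (b i - a i) = l i := by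
    intro i
    have h2 : b i - a i = ((l i : ℝ) : AddCircle (1:ℝ)) := by
      rw [hb]; exact add_sub_cancel_left _ _
    rw [h2]; exact hg_of _ ⟨(hl i).1.le, (hl i).2⟩
  have hg_zero : g 0 = 0 := by
    have : ((0:ℝ) : AddCircle (1:ℝ)) = 0 := by norm_num
    rw [← this]; exact hg_of 0 ⟨le_refl 0, one_pos⟩
  have hab_ne : ∀ i, a i ≠ b i := by
    intro i h
    have h2 : b i - a i = 0 := by rw [← h]; exact sub_self _
    have := hlb i
    rw [h2, hg_zero] at this
    exact absurd this.symm (ne_of_gt (hl i).1)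
  -- k ≥ 2
  have hk2 : 2 ≤ k := by
    rw [hk]
    refine Finset.one_lt_card.mpr ⟨g (a ⟨0, hn⟩), hmemS' _ (haS _), g (b ⟨0, hn⟩),
      hmemS' _ (hbS _), fun h => hab_ne _ (hg_inj h)⟩
  haveI : NeZero k := ⟨by omega⟩
  have h1 : (1 : ZMod k) ≠ 0 := by
    intro h
    have : ((1:ℕ) : ZMod k) = 0 := by exact_mod_cast h
    rw [ZMod.natCast_eq_zero_iff] at this
    have := Nat.le_of_dvd one_pos this
    omega
  set ι : AddCircle (1:ℝ) → ZMod k := fun x => ((pos x : ℕ) : ZMod k) with hι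
  set δ : AddCircle (1:ℝ) → AddCircle (1:ℝ) → ℕ :=
    fun p q => if pos p ≤ pos q then pos q - pos p else pos q + k - pos p with hδ
  have hδ_lt : ∀ p q, g p ∈ S' → g q ∈ S' → δ p q < k := by
    intro p q hp hq
    have h1' := hpos_lt p hp; have h2' := hpos_lt q hq
    rw [hδ]; dsimp only; split_ifs with h <;> omega
  have hpos_lt' : ∀ x, pos x < k := by
    intro x
    rw [hpos]; dsimp only
    split
    · exact Fin.isLt _
    · omega
  have hιδ : ∀ p q, ι p + ((δ p q : ℕ) : ZMod k) = ι q := by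
    intro p q
    have hp' := hpos_lt' p; have hq' := hpos_lt' q
    rw [hι, hδ]; dsimp only
    split_ifs with h
    · rw [← Nat.cast_add]
      congr 1
      omega
    · push_neg at h
      have : ((pos q + k - pos p : ℕ) : ZMod k) = ((pos q + k : ℕ) : ZMod k) - ((pos p : ℕ) : ZMod k) := by
        rw [Nat.cast_sub (by omega)]
      rw [this]
      push_cast [ZMod.natCast_self]
      ring

  have hkey : ∀ p s t, g p ∈ S' → g s ∈ S' → g t ∈ S' →
      (δ p s ≤ δ p t ↔ g (s - p) ≤ g (t - p)) := by
    intro p s t hp hs ht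
    have m1 := hpos_mono p s hp hs
    have m2 := hpos_mono p t hp ht
    have m3 := hpos_mono s t hs ht
    have ls := hpos_lt s hs; have lt' := hpos_lt t ht; have lp := hpos_lt p hp
    have hs1 := hg_mem s; have ht1 := hg_mem t; have hp1 := hg_mem p
    rw [hg_sub s p, hg_sub t p, hδ]; dsimp only
    by_cases c1 : pos p ≤ pos s <;> by_cases c2 : pos p ≤ pos t
    · rw [if_pos c1, if_pos c2, if_pos (m1.mp c1), if_pos (m2.mp c2)]
      constructor
      · intro h
        have h' : pos s ≤ pos t := by omega
        have := m3.mp h'; linarith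
      · intro h
        have h' : g s ≤ g t := by linarith
        have := m3.mpr h'; omega
    · rw [if_pos c1, if_neg c2, if_pos (m1.mp c1), if_neg (fun hc => c2 (m2.mpr hc))]
      constructor
      · intro _
        have := hs1.2; have := ht1.1; linarith
      · intro _; omega
    · rw [if_neg c1, if_pos c2, if_neg (fun hc => c1 (m1.mpr hc)), if_pos (m2.mp c2)]
      constructor
      · intro h; exfalso; omega
      · intro h; exfalso
        have := ht1.2; have := hs1.1; linarith
    · rw [if_neg c1, if_neg c2, if_neg (fun hc => c1 (m1.mpr hc)), if_neg (fun hc => c2 (m2.mpr hc))]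
      constructor
      · intro h
        have h' : pos s ≤ pos t := by omega
        have := m3.mp h'; linarith
      · intro h
        have h' : g s ≤ g t := by linarith
        have := m3.mpr h'; omega
  have hd_lt : ∀ i, δ (a i) (b i) < k :=
    fun i => hδ_lt _ _ (hmemS' _ (haS i)) (hmemS' _ (hbS i))
  set tr : Fin n → (cyc k).Subgraph :=
    fun i => (chain h1 (ι (a i)) (δ (a i) (b i))).toSubgraph with htr
  have hverts : ∀ i s, g s ∈ S' → (ι s ∈ (tr i).verts ↔ δ (a i) s ≤ δ (a i) (b i)) := by
    intro i s hsS
    have hdk := hd_lt i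
    rw [htr]; dsimp only
    rw [chain_verts]
    constructor
    · rintro ⟨j, hj, hjs⟩
      have h2 : ι (a i) + ((δ (a i) s : ℕ) : ZMod k) = ι (a i) + ((j : ℕ) : ZMod k) := by
        rw [hιδ]; exact hjs
      have h3 := add_left_cancel h2
      have h4 : δ (a i) s = j := by
        have h5 := congrArg ZMod.val h3
        rwa [ZMod.val_cast_of_lt (hδ_lt _ _ (hmemS' _ (haS i)) hsS),
          ZMod.val_cast_of_lt (by omega)] at h5
      omega
    · intro hle
      exact ⟨δ (a i) s, hle, (hιδ (a i) s).symm⟩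
  have harc_mem : ∀ i s, g s ∈ S' → (s ∈ arc (a i) (l i) ↔ ι s ∈ (tr i).verts) := by
    intro i s hsS
    rw [harc _ _ (hl i).1.le (hl i).2, hverts i s hsS, ← hlb i]
    exact (hkey (a i) s (b i) (hmemS' _ (haS i)) hsS (hmemS' _ (hbS i))).symm
  have hι_inj : ∀ x y, g x ∈ S' → g y ∈ S' → ι x = ι y → x = y := by
    intro x y hx hy h
    apply hpos_inj x y hx hy
    have h2 := congrArg ZMod.val h
    simp only [hι] at h2
    rwa [ZMod.val_cast_of_lt (hpos_lt x hx), ZMod.val_cast_of_lt (hpos_lt y hy)] at h2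
  have haι : ∀ i, ι (a i) ≠ ι (b i) := fun i h =>
    hab_ne i (hι_inj _ _ (hmemS' _ (haS i)) (hmemS' _ (hbS i)) h)
  have hend : ∀ i, ι (a i) + ((δ (a i) (b i) : ℕ) : ZMod k) = ι (b i) := fun i => hιδ _ _
  refine ⟨ZMod k, inferInstance, cyc k, fun v => ι (φ v), Set.range tr, ?_⟩
  constructor
  · rintro T ⟨i, rfl⟩
    exact chain_isTree h1 _ _ (hd_lt i)
  · intro u v huv
    obtain ⟨i, hu, hv⟩ := hadj u v huv
    exact ⟨tr i, ⟨i, rfl⟩, (harc_mem i _ (hmemS' _ (hφS u))).mp hu,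
      (harc_mem i _ (hmemS' _ (hφS v))).mp hv⟩
  · rintro u v huv hnuv T ⟨i, rfl⟩ hu hv
    have hu' : φ u ∈ arc (a i) (l i) := (harc_mem i _ (hmemS' _ (hφS u))).mpr hu
    have hv' : φ v ∈ arc (a i) (l i) := (harc_mem i _ (hmemS' _ (hφS v))).mpr hv
    rcases hnadj u v huv hnuv i hu' hv' with ⟨e1, e2⟩ | ⟨e1, e2⟩
    · refine ⟨by rw [e1, e2]; exact haι i, ?_⟩
      refine ⟨(chain h1 (ι (a i)) (δ (a i) (b i))).copy (by rw [e1]) (by rw [e2]; exact hend i),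
        ?_, ?_⟩
      · rw [Walk.isPath_copy]
        exact chain_isPath h1 _ _ (hd_lt i)
      · rw [toSubgraph_copy]
    · refine ⟨by rw [e1, e2]; exact (haι i).symm, ?_⟩
      refine ⟨((chain h1 (ι (a i)) (δ (a i) (b i))).reverse).copy
        (by rw [e2]; exact hend i) (by rw [e1]), ?_, ?_⟩
      · rw [Walk.isPath_copy]
        exact (chain_isPath h1 _ _ (hd_lt i)).reverse
      · rw [toSubgraph_copy, Walk.toSubgraph_reverse]
  · rintro v1 v1' v2 v2' hne1 hna1 hne2 hna2 heq T1 ⟨i1, rfl⟩ T2 ⟨i2, rfl⟩ hm1 hm1' hm2 hm2'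
    have A1 : φ v1 ∈ arc (a i1) (l i1) := (harc_mem _ _ (hmemS' _ (hφS v1))).mpr hm1
    have A1' : φ v1' ∈ arc (a i1) (l i1) := (harc_mem _ _ (hmemS' _ (hφS v1'))).mpr hm1'
    have A2 : φ v2 ∈ arc (a i2) (l i2) := (harc_mem _ _ (hmemS' _ (hφS v2))).mpr hm2
    have A2' : φ v2' ∈ arc (a i2) (l i2) := (harc_mem _ _ (hmemS' _ (hφS v2'))).mpr hm2'
    have e1 : φ v1 = a i1 ∨ φ v1 = b i1 := by
      rcases hnadj v1 v1' hne1 hna1 i1 A1 A1' with ⟨h, -⟩ | ⟨-, h⟩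
      · exact Or.inl h
      · exact Or.inr h
    have e2 : φ v2 = a i2 ∨ φ v2 = b i2 := by
      rcases hnadj v2 v2' hne2 hna2 i2 A2 A2' with ⟨h, -⟩ | ⟨-, h⟩
      · exact Or.inl h
      · exact Or.inr h
    have heq' : φ v1 = φ v2 := hι_inj _ _ (hmemS' _ (hφS v1)) (hmemS' _ (hφS v2)) heq
    by_cases hii : i1 = i2
    · rw [hii]
    · exfalso
      have hmem2 : φ v1 ∈ ({a i1, b i1} : Set (AddCircle (1:ℝ))) ∩ {a i2, b i2} := by
        constructor
        · rcases e1 with h | h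
          · exact Or.inl h
          · exact Or.inr h
        · rw [heq']
          rcases e2 with h | h
          · exact Or.inl h
          · exact Or.inr h
      rw [hdisj i1 i2 hii] at hmem2
      exact Set.notMem_empty _ hmem2
  · intro w hw T1 _ T2 _ _ _
    exfalso
    have hsub := cyc_nbhd k w
    have hle2 : ((cyc k).neighborSet w).ncard ≤ 2 := by
      refine le_trans (Set.ncard_le_ncard hsub (Set.toFinite _)) ?_
      refine le_trans (Set.ncard_insert_le _ _) ?_
      simp [Set.ncard_singleton]
    omega



end CompKim
end
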